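/- arXiv:2010.08085 — 9 statements merged into one kernel-verified Lean document; each statement's English description precedes it below -/
import Mathlib

section
/- Let p be a prime, m and n nonnegative integers with base-p digit expansions m = Σ_{i=0}^{j} m_i p^i and n = Σ_{i=0}^{j} n_i p^i where 0 ≤ m_i, n_i ≤ p−1. Then C(m, n) ≡ Π_{i=0}^{j} C(m_i, n_i) (mod p). -/
/-!
Mathlib's Lucas theorem `Choose.choose_modEq_prod_range_choose_nat` is phrased with the digits
`n / p ^ i % p`. So it only remains to read the digits off an expansion `∑ i < a, d i * p ^ i`
with `d i < p`: peeling off `d 0` shows that division by `p` shifts the digits, and the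
expansion is less than `p ^ a`.
-/

open Finset

namespace Nat

variable {b a : ℕ} {d : ℕ → ℕ}

theorem sum_range_mul_pow_lt (hd : ∀ i < a, d i < b) : ∑ i ∈ range a, d i * b ^ i < b ^ a := by
  induction a with
  | zero => simp
  | succ a ih =>
    have hlow : ∑ i ∈ range a, d i * b ^ i < b ^ a := ih fun i hi => hd i (by omega)
    calc ∑ i ∈ range (a + 1), d i * b ^ i
        = ∑ i ∈ range a, d i * b ^ i + d a * b ^ a := sum_range_succ _ _
      _ < b ^ a + d a * b ^ a := by gcongr
      _ = (d a + 1) * b ^ a := by ring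
      _ ≤ b * b ^ a := by gcongr; exact hd a (by omega)
      _ = b ^ (a + 1) := (_root_.pow_succ' b a).symm

theorem sum_range_succ_mul_pow (b a : ℕ) (d : ℕ → ℕ) :
    ∑ i ∈ range (a + 1), d i * b ^ i = d 0 + b * ∑ i ∈ range a, d (i + 1) * b ^ i := by
  rw [sum_range_succ', mul_sum, add_comm]
  simp only [pow_zero, mul_one, pow_succ']
  congr 1
  exact sum_congr rfl fun i _ => by ring

theorem sum_range_mul_pow_div_pow_mod {k : ℕ} (hk : k < a) (hd : ∀ i < a, d i < b) :
    (∑ i ∈ range a, d i * b ^ i) / b ^ k % b = d k := by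
  induction k generalizing a d with
  | zero =>
    obtain ⟨a, rfl⟩ : ∃ a', a = a' + 1 := ⟨a - 1, by omega⟩
    rw [sum_range_succ_mul_pow, pow_zero, Nat.div_one, add_mul_mod_self_left,
      mod_eq_of_lt (hd 0 hk)]
  | succ k ih =>
    obtain ⟨a, rfl⟩ : ∃ a', a = a' + 1 := ⟨a - 1, by omega⟩
    have hb : 0 < b := (hd 0 (by omega)).pos
    rw [sum_range_succ_mul_pow, pow_succ', ← Nat.div_div_eq_div_mul,
      add_mul_div_left _ _ hb, div_eq_of_lt (hd 0 (by omega)), zero_add]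
    exact ih (by omega) fun i hi => hd (i + 1) (by omega)

end Nat

theorem Choose.choose_sum_range_mul_pow_modEq_prod {p a : ℕ} [Fact p.Prime] {d e : ℕ → ℕ}
    (hd : ∀ i < a, d i < p) (he : ∀ i < a, e i < p) :
    Nat.choose (∑ i ∈ range a, d i * p ^ i) (∑ i ∈ range a, e i * p ^ i) ≡
      ∏ i ∈ range a, Nat.choose (d i) (e i) [MOD p] := by
  convert choose_modEq_prod_range_choose_nat (Nat.sum_range_mul_pow_lt hd)
    (Nat.sum_range_mul_pow_lt he) using 2 with i hi
  rw [Nat.sum_range_mul_pow_div_pow_mod (mem_range.mp hi) hd,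
    Nat.sum_range_mul_pow_div_pow_mod (mem_range.mp hi) he]

theorem stmt_1 (p : ℕ) (hp : p.Prime) (j : ℕ) (m n : ℕ) (mi ni : ℕ → ℕ)
    (hmi : ∀ i ≤ j, mi i ≤ p - 1) (hni : ∀ i ≤ j, ni i ≤ p - 1)
    (hm : m = ∑ i ∈ Finset.range (j + 1), mi i * p ^ i)
    (hn : n = ∑ i ∈ Finset.range (j + 1), ni i * p ^ i) :
    Nat.choose m n ≡ ∏ i ∈ Finset.range (j + 1), Nat.choose (mi i) (ni i) [MOD p] := by
  have : Fact p.Prime := ⟨hp⟩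
  have digit_lt {x : ℕ → ℕ} (hx : ∀ i ≤ j, x i ≤ p - 1) : ∀ i < j + 1, x i < p :=
    fun i hi => (hx i (Nat.lt_succ_iff.mp hi)).trans_lt (Nat.sub_one_lt hp.ne_zero)
  subst hm hn
  exact Choose.choose_sum_range_mul_pow_modEq_prod (digit_lt hmi) (digit_lt hni)
end

section
/- Let a and b be relatively prime positive integers with a > b, and let n ≥ 2 be an integer. Then there exists a prime p dividing a^n − b^n that does not divide a^m − b^m for any positive integer m < n, except when (a, b) = (2, 1) and n = 6, or when a + b is a power of 2 and n = 2. -/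
/-!
Write `Φₙ(x, y) = y^φ(n) Φₙ(x / y)` for the homogenized cyclotomic polynomial, so that
`aⁿ - bⁿ = ∏_{d ∣ n} Φ_d(a, b)`. If a prime `q` divides `Φₙ(a, b)`, then `a / b` has order
`n / q^{v_q(n)}` modulo `q`. So `q` is a primitive divisor of `aⁿ - bⁿ` unless `q ∣ n`, and then
`n / q^{v_q(n)}` divides `q - 1`; two distinct such primes would each be smaller than the other.
Hence without a primitive divisor `Φₙ(a, b)` is a power of a single prime `q ∣ n`. Lifting the
exponent (or, for `q = 2`, a computation mod 4) gives `q² ∤ Φₙ(a, b)` unless `n = 2`, so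
`Φₙ(a, b) ≤ q`. On the other hand, writing `n = e q^k` with `e ∣ q - 1`,
`Φₙ(a, b) = Φ_{eq}(A, B) = Φ_e(A^q, B^q) / Φ_e(A, B)` with `A = a^{q^{k-1}}`, `B = b^{q^{k-1}}`,
and the bounds `(x - y)^φ(e) ≤ Φ_e(x, y) ≤ (x + y)^φ(e)` show that this exceeds `q`, except for
`(a, b, n) = (2, 1, 6)`.
-/

namespace Polynomial

noncomputable def cyclotomic₂ {R : Type*} [CommRing R] (n : ℕ) (x y : R) : R :=
  MvPolynomial.eval ![x, y] ((cyclotomic n R).homogenize n.totient)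

section CommRing

variable {R S : Type*} [CommRing R] [CommRing S]

theorem map_cyclotomic₂ (f : R →+* S) (n : ℕ) (x y : R) :
    f (cyclotomic₂ n x y) = cyclotomic₂ n (f x) (f y) := by
  rw [cyclotomic₂, cyclotomic₂, MvPolynomial.map_eval, ← homogenize_map, map_cyclotomic]
  congr 2
  ext i; fin_cases i <;> rfl

theorem prod_cyclotomic₂ {n : ℕ} (hn : 0 < n) (x y : R) :
    ∏ d ∈ n.divisors, cyclotomic₂ d x y = x ^ n - y ^ n := by
  have h := homogenize_finsetProd (s := n.divisors) (p := fun d => cyclotomic d R)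
    (n := Nat.totient) fun _ _ => natDegree_cyclotomic_le
  rw [Nat.sum_totient, prod_cyclotomic_eq_X_pow_sub_one hn, homogenize_sub,
    homogenize_X_pow le_rfl, homogenize_one] at h
  simp only [cyclotomic₂, ← map_prod, ← h]
  simp

theorem cyclotomic₂_two (x y : R) : cyclotomic₂ 2 x y = x + y := by
  simp [cyclotomic₂, homogenize_X]

theorem cyclotomic₂_prime {p : ℕ} (hp : p.Prime) (x y : R) :
    cyclotomic₂ p x y = ∑ i ∈ Finset.range p, x ^ i * y ^ (p - 1 - i) := by
  have := Fact.mk hp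
  rw [cyclotomic₂, cyclotomic_prime, Nat.totient_prime hp, homogenize_finsetSum, map_sum]
  refine Finset.sum_congr rfl fun i hi => ?_
  rw [homogenize_X_pow (Nat.le_sub_one_of_lt (Finset.mem_range.1 hi))]
  simp [Nat.sub_sub, add_comm 1]

@[norm_cast]
theorem intCast_cyclotomic₂ (n : ℕ) (x y : ℤ) :
    ((cyclotomic₂ n x y : ℤ) : R) = cyclotomic₂ n (x : R) (y : R) :=
  map_cyclotomic₂ (Int.castRingHom R) n x y

theorem cyclotomic₂_dvd_pow_sub_pow {n : ℕ} (hn : 0 < n) (x y : R) :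
    cyclotomic₂ n x y ∣ x ^ n - y ^ n := by
  rw [← prod_cyclotomic₂ hn]
  exact Finset.dvd_prod_of_mem _ (Nat.mem_divisors_self n hn.ne')

theorem cyclotomic₂_mul_pow_sub_pow_dvd {m n : ℕ} (hn : 0 < n) (hmn : m ∣ n) (hne : m ≠ n)
    (x y : R) : cyclotomic₂ n x y * (x ^ m - y ^ m) ∣ x ^ n - y ^ n := by
  have hm : 0 < m := Nat.pos_of_dvd_of_pos hmn hn
  have hsub : insert n m.divisors ⊆ n.divisors := by
    refine Finset.insert_subset (Nat.mem_divisors_self n hn.ne') fun d hd => ?_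
    exact Nat.mem_divisors.2 ⟨(Nat.dvd_of_mem_divisors hd).trans hmn, hn.ne'⟩
  have hnm : n ∉ m.divisors := fun h => hne (Nat.le_antisymm (Nat.divisor_le h)
    (Nat.le_of_dvd hn hmn)).symm
  rw [← prod_cyclotomic₂ hn, ← prod_cyclotomic₂ hm,
    ← Finset.prod_insert (f := fun d => cyclotomic₂ d x y) hnm]
  exact Finset.prod_dvd_prod_of_subset _ _ _ hsub

end CommRing

section Field

variable {K : Type*} [Field K]

theorem cyclotomic₂_eq_eval_div (n : ℕ) (x : K) {y : K} (hy : y ≠ 0) :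
    cyclotomic₂ n x y = (cyclotomic n K).eval (x / y) * y ^ n.totient :=
  eval_homogenize natDegree_cyclotomic_le ![x, y] hy

theorem isPrimitiveRoot_div_of_cyclotomic₂_eq_zero {p : ℕ} [Fact p.Prime]
    [CharP K p] {n : ℕ} (hn : n ≠ 0) {x y : K} (hy : y ≠ 0) (h : cyclotomic₂ n x y = 0) :
    IsPrimitiveRoot (x / y) (ordCompl[p] n) := by
  rw [cyclotomic₂_eq_eval_div _ _ hy] at h
  have hroot : (cyclotomic (ordProj[p] n * ordCompl[p] n) K).IsRoot (x / y) := by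
    rw [Nat.ordProj_mul_ordCompl_eq_self]
    exact (mul_eq_zero.1 h).resolve_right (pow_ne_zero _ hy)
  have : NeZero ((ordCompl[p] n : ℕ) : K) :=
    ⟨fun h0 => Nat.not_dvd_ordCompl Fact.out hn ((CharP.cast_eq_zero_iff K p _).1 h0)⟩
  exact isRoot_cyclotomic_prime_pow_mul_iff_of_charP.1 hroot

end Field

section IsDomain

variable {R : Type*} [CommRing R] [IsDomain R]

theorem cyclotomic₂_mul_prime_of_dvd {p n : ℕ} (hp : p.Prime) (hpn : p ∣ n) (x : R) {y : R}
    (hy : y ≠ 0) : cyclotomic₂ (n * p) x y = cyclotomic₂ n (x ^ p) (y ^ p) := by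
  apply IsFractionRing.injective R (FractionRing R)
  have hy' : algebraMap R (FractionRing R) y ≠ 0 :=
    (map_ne_zero_iff _ (IsFractionRing.injective R (FractionRing R))).2 hy
  simp only [map_cyclotomic₂, map_pow]
  rw [cyclotomic₂_eq_eval_div _ _ hy', cyclotomic₂_eq_eval_div _ _ (pow_ne_zero p hy'), ← div_pow,
    ← expand_eval, cyclotomic_expand_eq_cyclotomic hp hpn, mul_comm n,
    Nat.totient_mul_of_prime_of_dvd hp hpn, pow_mul]

theorem cyclotomic₂_mul_prime_pow_of_dvd {p n : ℕ} (hp : p.Prime) (hpn : p ∣ n) (k : ℕ)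
    (x : R) {y : R} (hy : y ≠ 0) :
    cyclotomic₂ (n * p ^ k) x y = cyclotomic₂ n (x ^ p ^ k) (y ^ p ^ k) := by
  induction k generalizing n with
  | zero => simp
  | succ k ih =>
    rw [pow_succ', ← mul_assoc, ih (dvd_mul_of_dvd_left hpn _),
      cyclotomic₂_mul_prime_of_dvd hp hpn _ (pow_ne_zero _ hy), ← pow_mul, ← pow_mul,
      mul_comm (p ^ k)]

theorem cyclotomic₂_pow_prime_of_not_dvd {p n : ℕ} (hp : p.Prime) (hpn : ¬p ∣ n) (x : R)
    {y : R} (hy : y ≠ 0) :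
    cyclotomic₂ n (x ^ p) (y ^ p) = cyclotomic₂ (n * p) x y * cyclotomic₂ n x y := by
  apply IsFractionRing.injective R (FractionRing R)
  have hy' : algebraMap R (FractionRing R) y ≠ 0 :=
    (map_ne_zero_iff _ (IsFractionRing.injective R (FractionRing R))).2 hy
  simp only [map_cyclotomic₂, map_pow, map_mul]
  have htot : (n * p).totient + n.totient = p * n.totient := by
    rw [Nat.totient_mul ((hp.coprime_iff_not_dvd.2 hpn).symm), Nat.totient_prime hp]
    have := hp.one_le
    zify [this]
    ring
  rw [cyclotomic₂_eq_eval_div _ _ hy', cyclotomic₂_eq_eval_div _ _ hy',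
    cyclotomic₂_eq_eval_div _ _ (pow_ne_zero p hy'), ← div_pow, ← expand_eval,
    cyclotomic_expand_eq_cyclotomic_mul hp hpn, eval_mul, ← pow_mul, ← htot, pow_add]
  ring

end IsDomain

section Real

variable {x y : ℝ}

theorem cyclotomic₂_pos (n : ℕ) (hy : 0 < y) (hxy : y < x) : 0 < cyclotomic₂ n x y := by
  rw [cyclotomic₂_eq_eval_div _ _ hy.ne']
  exact mul_pos (cyclotomic_pos' n ((one_lt_div hy).2 hxy)) (pow_pos hy _)

theorem sub_pow_totient_le_cyclotomic₂ (n : ℕ) (hy : 0 < y) (hxy : y < x) :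
    (x - y) ^ n.totient ≤ cyclotomic₂ n x y := by
  rw [cyclotomic₂_eq_eval_div _ _ hy.ne', show x - y = (x / y - 1) * y by field_simp, mul_pow]
  gcongr
  exact sub_one_pow_totient_le_cyclotomic_eval ((one_lt_div hy).2 hxy) n

theorem sub_pow_totient_lt_cyclotomic₂ {n : ℕ} (hn : 2 ≤ n) (hy : 0 < y) (hxy : y < x) :
    (x - y) ^ n.totient < cyclotomic₂ n x y := by
  rw [cyclotomic₂_eq_eval_div _ _ hy.ne', show x - y = (x / y - 1) * y by field_simp, mul_pow]
  gcongr
  exact sub_one_pow_totient_lt_cyclotomic_eval hn ((one_lt_div hy).2 hxy)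

theorem cyclotomic₂_le_add_pow_totient (n : ℕ) (hy : 0 < y) (hxy : y < x) :
    cyclotomic₂ n x y ≤ (x + y) ^ n.totient := by
  rw [cyclotomic₂_eq_eval_div _ _ hy.ne', show x + y = (x / y + 1) * y by field_simp, mul_pow]
  gcongr
  exact cyclotomic_eval_le_add_one_pow_totient ((one_lt_div hy).2 hxy) n

end Real

end Polynomial

open Polynomial

theorem Prime.not_dvd_right_of_dvd_pow_sub_pow {R : Type*} [CommRing R] {p x y : R}
    (hp : Prime p) (hxy : IsCoprime x y) {n : ℕ} (hn : n ≠ 0) (h : p ∣ x ^ n - y ^ n) :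
    ¬p ∣ y := by
  intro hpy
  have hpx : p ∣ x := hp.dvd_of_dvd_pow (by simpa using dvd_add h (dvd_pow hpy hn))
  exact hp.not_isUnit (hxy.isUnit_of_dvd' hpx hpy)

theorem Prime.not_dvd_left_of_dvd_pow_sub_pow {R : Type*} [CommRing R] {p x y : R}
    (hp : Prime p) (hxy : IsCoprime x y) {n : ℕ} (hn : n ≠ 0) (h : p ∣ x ^ n - y ^ n) :
    ¬p ∣ x :=
  hp.not_dvd_right_of_dvd_pow_sub_pow hxy.symm hn (dvd_sub_comm.1 h)

theorem Nat.lt_of_dvd_of_ordCompl_dvd_sub_one {n p q : ℕ} (hp : p.Prime) (hq : q.Prime)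
    (hpq : p ≠ q) (hpn : p ∣ n) (hq1 : ordCompl[q] n ∣ q - 1) : p < q := by
  have hpq' : p ∣ q - 1 := (Nat.dvd_ordCompl_of_dvd_not_dvd hpn
    fun h => hpq ((Nat.prime_dvd_prime_iff_eq hq hp).1 h).symm).trans hq1
  have := Nat.le_of_dvd (Nat.sub_pos_of_lt hq.one_lt) hpq'
  omega

theorem Nat.eq_of_ordCompl_dvd_sub_one {n p q : ℕ} (hp : p.Prime) (hq : q.Prime) (hpn : p ∣ n)
    (hqn : q ∣ n) (hp1 : ordCompl[p] n ∣ p - 1) (hq1 : ordCompl[q] n ∣ q - 1) : p = q := by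
  by_contra hne
  exact lt_asymm (Nat.lt_of_dvd_of_ordCompl_dvd_sub_one hp hq hne hpn hq1)
    (Nat.lt_of_dvd_of_ordCompl_dvd_sub_one hq hp (Ne.symm hne) hqn hp1)

theorem Int.exists_eq_pow_of_forall_prime_dvd_eq {z : ℤ} (hz : 0 < z) {p : ℕ}
    (h : ∀ r : ℕ, r.Prime → (r : ℤ) ∣ z → r = p) : ∃ t : ℕ, z = (p : ℤ) ^ t := by
  have hz' := Nat.eq_prime_pow_of_unique_prime_dvd (Int.natAbs_ne_zero.2 hz.ne')
    fun hr hrz => h _ hr (Int.natCast_dvd.2 hrz)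
  exact ⟨_, by rw [← Int.natAbs_of_nonneg hz.le, hz']; push_cast; rfl⟩

section ZMod

variable {q : ℕ} [Fact q.Prime] {a b : ℤ}

theorem isPrimitiveRoot_zmod_of_dvd_cyclotomic₂ (hab : IsCoprime a b) {n : ℕ} (hn : n ≠ 0)
    (h : (q : ℤ) ∣ cyclotomic₂ n a b) : IsPrimitiveRoot ((a : ZMod q) / b) (ordCompl[q] n) := by
  have hb : (b : ZMod q) ≠ 0 := by
    rw [Ne, ZMod.intCast_zmod_eq_zero_iff_dvd]
    exact (Nat.prime_iff_prime_int.1 Fact.out).not_dvd_right_of_dvd_pow_sub_pow hab hn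
      (h.trans (cyclotomic₂_dvd_pow_sub_pow (Nat.pos_of_ne_zero hn) a b))
  refine isPrimitiveRoot_div_of_cyclotomic₂_eq_zero hn hb ?_
  rwa [← intCast_cyclotomic₂, ZMod.intCast_zmod_eq_zero_iff_dvd]

theorem dvd_pow_sub_pow_iff_ordCompl_dvd (hab : IsCoprime a b) {n : ℕ} (hn : n ≠ 0)
    (h : (q : ℤ) ∣ cyclotomic₂ n a b) (m : ℕ) :
    (q : ℤ) ∣ a ^ m - b ^ m ↔ ordCompl[q] n ∣ m := by
  have hζ := isPrimitiveRoot_zmod_of_dvd_cyclotomic₂ hab hn h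
  have hb : (b : ZMod q) ≠ 0 := (div_ne_zero_iff.1 (hζ.ne_zero (Nat.ordCompl_pos q hn).ne')).2
  rw [← hζ.pow_eq_one_iff_dvd, div_pow, div_eq_one_iff_eq (pow_ne_zero _ hb),
    ← ZMod.intCast_eq_intCast_iff_dvd_sub]
  push_cast
  exact eq_comm

theorem ordCompl_dvd_sub_one_of_dvd_cyclotomic₂ (hab : IsCoprime a b) {n : ℕ} (hn : n ≠ 0)
    (h : (q : ℤ) ∣ cyclotomic₂ n a b) : ordCompl[q] n ∣ q - 1 := by
  have hζ := isPrimitiveRoot_zmod_of_dvd_cyclotomic₂ hab hn h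
  exact hζ.dvd_of_pow_eq_one _
    (ZMod.pow_card_sub_one_eq_one (hζ.ne_zero (Nat.ordCompl_pos q hn).ne'))

end ZMod

theorem not_sq_dvd_cyclotomic₂_mul_prime {R : Type*} [CommRing R] [IsDomain R] {p : ℕ}
    (hp : Prime (p : R)) (hodd : Odd p) {x y : R} {m : ℕ} (hm : 0 < m) (hxy : x ^ m ≠ y ^ m)
    (hdvd : (p : R) ∣ x ^ m - y ^ m) (hx : ¬(p : R) ∣ x) :
    ¬(p : R) ^ 2 ∣ cyclotomic₂ (m * p) x y := by
  have hp1 : p ≠ 1 := by rintro rfl; exact hp.not_isUnit (by simp)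
  have hne : m ≠ m * p := fun h => hp1 (by simpa [hm.ne'] using h.symm)
  have hΦG :
      cyclotomic₂ (m * p) x y ∣ ∑ i ∈ Finset.range p, (x ^ m) ^ i * (y ^ m) ^ (p - 1 - i) := by
    have h := cyclotomic₂_mul_pow_sub_pow_dvd (Nat.mul_pos hm hodd.pos) (dvd_mul_right m p) hne x y
    rw [pow_mul, pow_mul, ← geom_sum₂_mul (x ^ m) (y ^ m) p] at h
    exact (mul_dvd_mul_iff_right (sub_ne_zero.2 hxy)).1 h
  have hmult := emultiplicity_geom_sum₂_eq_one hp hodd hdvd fun h => hx (hp.dvd_of_dvd_pow h)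
  exact fun hsq => not_pow_dvd_of_emultiplicity_lt (by rw [hmult]; norm_num) (hsq.trans hΦG)

theorem prime_lt_cyclotomic₂_prime {p : ℕ} (hp : p.Prime) {x y : ℤ} (hy : 0 < y) (hxy : y < x) :
    (p : ℤ) < cyclotomic₂ p x y := by
  rw [cyclotomic₂_prime hp]
  calc (p : ℤ) = ∑ _i ∈ Finset.range p, 1 := by simp
    _ < _ := by
      refine Finset.sum_lt_sum (fun i _ => one_le_mul_of_one_le_of_one_le
        (one_le_pow₀ (by omega)) (one_le_pow₀ (by omega))) ⟨p - 1, by simp [hp.pos], ?_⟩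
      simpa using one_lt_pow₀ (by omega : 1 < x) (Nat.sub_ne_zero_of_lt hp.one_lt)

theorem mul_add_lt_pow_sub_pow {q : ℕ} (hq : 3 ≤ q) {x y : ℤ} (hy : 0 < y) (hxy : y < x)
    (hexc : ¬(q = 3 ∧ x = 2)) : q * (x + y) < x ^ q - y ^ q := by
  obtain ⟨r, rfl⟩ : ∃ r, q = r + 3 := ⟨q - 3, by omega⟩
  have hq_le : ((r + 3 : ℕ) : ℤ) ≤ x ^ (r + 1) := by
    rcases Nat.eq_zero_or_pos r with rfl | hr
    · simp only [zero_add, true_and, pow_one] at hexc ⊢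
      omega
    · have h2 : r + 3 ≤ 2 ^ (r + 1) := by
        have := @Nat.lt_two_pow_self r
        rw [pow_succ]; omega
      calc ((r + 3 : ℕ) : ℤ) ≤ 2 ^ (r + 1) := by exact_mod_cast h2
        _ ≤ x ^ (r + 1) := pow_le_pow_left₀ (by norm_num) (by omega) _
  have hpow : y ^ (r + 1) < x ^ (r + 1) := pow_lt_pow_left₀ hxy hy.le (by omega)
  have hsplit : x ^ (r + 3) - y ^ (r + 3) =
      x ^ (r + 1) * (x - y) * (x + y) + y ^ 2 * (x ^ (r + 1) - y ^ (r + 1)) := by ring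
  have hmain : ((r + 3 : ℕ) : ℤ) * (x + y) ≤ x ^ (r + 1) * (x - y) * (x + y) := by
    have : x ^ (r + 1) ≤ x ^ (r + 1) * (x - y) :=
      le_mul_of_one_le_right (pow_pos (by omega) _).le (by omega)
    nlinarith
  have hrest : 0 < y ^ 2 * (x ^ (r + 1) - y ^ (r + 1)) := mul_pos (pow_pos hy 2) (sub_pos.2 hpow)
  linarith

theorem prime_lt_cyclotomic₂_mul {q e : ℕ} (hq : q.Prime) (he : e ∣ q - 1) {x y : ℤ}
    (hy : 0 < y) (hxy : y < x) (hexc : ¬(e = 2 ∧ q = 3 ∧ x = 2)) :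
    (q : ℤ) < cyclotomic₂ (e * q) x y := by
  obtain rfl | he1 := eq_or_ne e 1
  · rw [one_mul]
    exact prime_lt_cyclotomic₂_prime hq hy hxy
  have he_le : e ≤ q - 1 := Nat.le_of_dvd (Nat.sub_pos_of_lt hq.one_lt) he
  have he0 : 0 < e := Nat.pos_of_ne_zero fun h => by
    rw [h, zero_dvd_iff] at he; have := hq.two_le; omega
  have hq3 : 3 ≤ q := by omega
  have hexc' : ¬(q = 3 ∧ x = 2) := by
    rintro ⟨rfl, rfl⟩
    exact hexc ⟨by have := Nat.le_of_dvd two_pos he; omega, rfl, rfl⟩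
  have hφ : e.totient ≠ 0 := (Nat.totient_pos.2 he0).ne'
  have hfac := cyclotomic₂_pow_prime_of_not_dvd hq (fun h => by have := Nat.le_of_dvd he0 h; omega)
    x hy.ne'
  have hxyq : y ^ q < x ^ q := pow_lt_pow_left₀ hxy hy.le hq.ne_zero
  have hlow : (x ^ q - y ^ q) ^ e.totient ≤ cyclotomic₂ e (x ^ q) (y ^ q) := by
    exact_mod_cast sub_pow_totient_le_cyclotomic₂ e (x := ((x ^ q : ℤ) : ℝ))
      (y := ((y ^ q : ℤ) : ℝ)) (by exact_mod_cast pow_pos hy q) (by exact_mod_cast hxyq)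
  have hup : cyclotomic₂ e x y ≤ (x + y) ^ e.totient := by
    exact_mod_cast cyclotomic₂_le_add_pow_totient e (x := (x : ℝ)) (y := (y : ℝ))
      (by exact_mod_cast hy) (by exact_mod_cast hxy)
  have hpos : 0 < cyclotomic₂ e x y := by
    exact_mod_cast cyclotomic₂_pos e (x := (x : ℝ)) (y := (y : ℝ))
      (by exact_mod_cast hy) (by exact_mod_cast hxy)
  refine lt_of_mul_lt_mul_right ?_ hpos.le
  calc (q : ℤ) * cyclotomic₂ e x y ≤ q * (x + y) ^ e.totient := by gcongr
    _ ≤ (q * (x + y)) ^ e.totient := by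
      rw [mul_pow]
      exact mul_le_mul_of_nonneg_right (le_self_pow₀ (by exact_mod_cast hq.one_le) hφ)
        (pow_pos (by omega) _).le
    _ < (x ^ q - y ^ q) ^ e.totient :=
      pow_lt_pow_left₀ (mul_add_lt_pow_sub_pow hq3 hy hxy hexc')
        (mul_pos (by exact_mod_cast hq.pos) (by omega)).le hφ
    _ ≤ cyclotomic₂ e (x ^ q) (y ^ q) := hlow
    _ = cyclotomic₂ (e * q) x y * cyclotomic₂ e x y := hfac

theorem cyclotomic₂_two_pow_emod_four {x y : ℤ} (hx : Odd x) (hy : Odd y) {k : ℕ} (hk : 2 ≤ k) :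
    cyclotomic₂ (2 ^ k) x y % 4 = 2 := by
  obtain ⟨j, rfl⟩ : ∃ j, k = j + 2 := ⟨k - 2, by omega⟩
  rw [show 2 ^ (j + 2) = 2 * 2 ^ (j + 1) by ring, cyclotomic₂_mul_prime_pow_of_dvd Nat.prime_two
    dvd_rfl _ x (by rintro rfl; simp at hy), cyclotomic₂_two, pow_succ, pow_mul, pow_mul,
    Int.add_emod, Int.sq_mod_four_eq_one_of_odd hx.pow, Int.sq_mod_four_eq_one_of_odd hy.pow]
  rfl

theorem prime_lt_cyclotomic₂ {q n : ℕ} (hq : q.Prime) (hqn : q ∣ n) (hn : n ≠ 0)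
    (hq1 : ordCompl[q] n ∣ q - 1) {a b : ℤ} (hb : 0 < b) (hba : b < a)
    (hexc : ¬(a = 2 ∧ b = 1 ∧ n = 6)) : (q : ℤ) < cyclotomic₂ n a b := by
  have hk : 0 < n.factorization q := hq.factorization_pos_of_dvd hn hqn
  have hn_eq : n = ordCompl[q] n * q * q ^ (n.factorization q - 1) := by
    rw [mul_assoc, ← pow_succ', Nat.sub_add_cancel hk, mul_comm, Nat.ordProj_mul_ordCompl_eq_self]
  rw [hn_eq, cyclotomic₂_mul_prime_pow_of_dvd hq (dvd_mul_left q _) _ a hb.ne']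
  refine prime_lt_cyclotomic₂_mul hq hq1 (pow_pos hb _) (pow_lt_pow_left₀ hba hb.le
    (pow_pos hq.pos _).ne') ?_
  -- in the excluded case `a ^ 3 ^ (k - 1) = 2` forces `a = 2` and `k = 1`, so `n = 2 * 3`
  rintro ⟨he, rfl, ha⟩
  have h := congrArg Int.natAbs ha
  rw [Int.natAbs_pow] at h
  obtain ⟨ha2, h3⟩ := (Nat.prime_two.pow_eq_iff).1 h
  have hk1 : n.factorization 3 - 1 = 0 := (Nat.pow_eq_one.1 h3).resolve_left (by norm_num)
  refine hexc ⟨by omega, by omega, ?_⟩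
  rw [hn_eq, he, hk1]
  rfl

theorem not_sq_dvd_cyclotomic₂ {q n : ℕ} (hq : q.Prime) (hqn : q ∣ n) (hn : n ≠ 0) (hn2 : n ≠ 2)
    {a b : ℤ} (hab : IsCoprime a b) (hb : 0 < b) (hba : b < a)
    (hqΦ : (q : ℤ) ∣ cyclotomic₂ n a b) : ¬(q : ℤ) ^ 2 ∣ cyclotomic₂ n a b := by
  have := Fact.mk hq
  have hprime := Nat.prime_iff_prime_int.1 hq
  have hpow := hqΦ.trans (cyclotomic₂_dvd_pow_sub_pow (Nat.pos_of_ne_zero hn) a b)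
  have ha := hprime.not_dvd_left_of_dvd_pow_sub_pow hab hn hpow
  have hk : 0 < n.factorization q := hq.factorization_pos_of_dvd hn hqn
  obtain rfl | hodd := hq.eq_two_or_odd'
  · have hb' := hprime.not_dvd_right_of_dvd_pow_sub_pow hab hn hpow
    have he : ordCompl[2] n = 1 :=
      Nat.dvd_one.1 (ordCompl_dvd_sub_one_of_dvd_cyclotomic₂ hab hn hqΦ)
    have hn_eq : n = 2 ^ n.factorization 2 := by
      conv_lhs => rw [← Nat.ordProj_mul_ordCompl_eq_self n 2, he, mul_one]
    have hk2 : 2 ≤ n.factorization 2 := by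
      by_contra! h
      exact hn2 (by rw [hn_eq, show n.factorization 2 = 1 by omega]; rfl)
    have h4 := cyclotomic₂_two_pow_emod_four (x := a) (y := b)
      (Int.not_even_iff_odd.1 (by rwa [even_iff_two_dvd]))
      (Int.not_even_iff_odd.1 (by rwa [even_iff_two_dvd])) hk2
    rw [← hn_eq] at h4
    norm_num
    omega
  · have hm : 0 < n / q := Nat.div_pos (Nat.le_of_dvd (Nat.pos_of_ne_zero hn) hqn) hq.pos
    have hdvd : (q : ℤ) ∣ a ^ (n / q) - b ^ (n / q) := by
      refine (dvd_pow_sub_pow_iff_ordCompl_dvd hab hn hqΦ _).2 (Nat.dvd_div_of_mul_dvd ?_)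
      conv_rhs => rw [← Nat.ordProj_mul_ordCompl_eq_self n q]
      exact mul_dvd_mul_right (dvd_pow_self q hk.ne') _
    rw [← Nat.div_mul_cancel hqn]
    exact not_sq_dvd_cyclotomic₂_mul_prime hprime hodd hm
      (pow_lt_pow_left₀ hba hb.le hm.ne').ne' hdvd ha

theorem Nat.Prime.dvd_of_dvd_cyclotomic₂ {q : ℕ} (hq : q.Prime) {a b : ℤ} (hab : IsCoprime a b)
    {m n : ℕ} (hm : 0 < m) (hmn : m < n) (hqΦ : (q : ℤ) ∣ cyclotomic₂ n a b)
    (hqm : (q : ℤ) ∣ a ^ m - b ^ m) : q ∣ n := by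
  have := Fact.mk hq
  have hn : n ≠ 0 := by omega
  by_contra hqn
  have hdvd := (dvd_pow_sub_pow_iff_ordCompl_dvd hab hn hqΦ m).1 hqm
  rw [(Nat.ordCompl_eq_self_iff_zero_or_not_dvd n hq).2 (Or.inr hqn)] at hdvd
  exact hmn.not_ge (Nat.le_of_dvd hm hdvd)

theorem one_lt_cyclotomic₂ {n : ℕ} (hn : 2 ≤ n) {a b : ℤ} (hb : 0 < b) (hba : b < a) :
    1 < cyclotomic₂ n a b := by
  have h := sub_pow_totient_lt_cyclotomic₂ hn (x := (a : ℝ)) (y := (b : ℝ))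
    (by exact_mod_cast hb) (by exact_mod_cast hba)
  exact (one_le_pow₀ (by omega : (1 : ℤ) ≤ a - b)).trans_lt (by exact_mod_cast h)

theorem exists_prime_dvd_pow_sub_pow_not_dvd {a b : ℤ} (hb : 0 < b) (hba : b < a)
    (hab : IsCoprime a b) {n : ℕ} (hn : 2 ≤ n) (hexc1 : ¬(a = 2 ∧ b = 1 ∧ n = 6))
    (hexc2 : ¬((∃ s : ℕ, a + b = 2 ^ s) ∧ n = 2)) :
    ∃ p : ℕ, p.Prime ∧ (p : ℤ) ∣ a ^ n - b ^ n ∧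
      ∀ m : ℕ, 0 < m → m < n → ¬(p : ℤ) ∣ a ^ m - b ^ m := by
  by_contra! hnone
  have hn0 : n ≠ 0 := by omega
  have hfactor (r : ℕ) (hr : r.Prime) (hrΦ : (r : ℤ) ∣ cyclotomic₂ n a b) :
      r ∣ n ∧ ordCompl[r] n ∣ r - 1 := by
    have := Fact.mk hr
    obtain ⟨m, hm, hmn, hrm⟩ := hnone r hr (hrΦ.trans (cyclotomic₂_dvd_pow_sub_pow (by omega) a b))
    exact ⟨hr.dvd_of_dvd_cyclotomic₂ hab hm hmn hrΦ hrm,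
      ordCompl_dvd_sub_one_of_dvd_cyclotomic₂ hab hn0 hrΦ⟩
  have hΦ := one_lt_cyclotomic₂ hn hb hba
  obtain ⟨q, hq, hqΦ⟩ := Nat.exists_prime_and_dvd (n := (cyclotomic₂ n a b).natAbs) (by omega)
  rw [← Int.natCast_dvd] at hqΦ
  obtain ⟨hqn, hq1⟩ := hfactor q hq hqΦ
  obtain ⟨t, ht⟩ := Int.exists_eq_pow_of_forall_prime_dvd_eq (by omega) fun r hr hrΦ =>
    have ⟨hrn, hr1⟩ := hfactor r hr hrΦ
    Nat.eq_of_ordCompl_dvd_sub_one hr hq hrn hqn hr1 hq1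
  obtain rfl | hn2 := eq_or_ne n 2
  · rw [cyclotomic₂_two, (Nat.prime_dvd_prime_iff_eq hq Nat.prime_two).1 hqn] at ht
    exact hexc2 ⟨⟨t, by exact_mod_cast ht⟩, rfl⟩
  have ht1 : t ≤ 1 := by
    by_contra! h
    exact not_sq_dvd_cyclotomic₂ hq hqn hn0 hn2 hab hb hba hqΦ (ht ▸ pow_dvd_pow _ h)
  have hle : cyclotomic₂ n a b ≤ q :=
    ht ▸ (pow_le_pow_right₀ (by exact_mod_cast hq.one_le) ht1).trans_eq (pow_one _)
  exact (prime_lt_cyclotomic₂ hq hqn hn0 hq1 hb hba hexc1).not_ge hle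

theorem stmt_2 (a b : ℕ) (hb : 0 < b) (hab : b < a) (hcop : Nat.Coprime a b)
    (n : ℕ) (hn : 2 ≤ n)
    (hexc1 : ¬ (a = 2 ∧ b = 1 ∧ n = 6))
    (hexc2 : ¬ ((∃ s : ℕ, a + b = 2 ^ s) ∧ n = 2)) :
    ∃ p : ℕ, p.Prime ∧ p ∣ a ^ n - b ^ n ∧
      ∀ m : ℕ, 0 < m → m < n → ¬ p ∣ a ^ m - b ^ m := by
  have hcast (m : ℕ) : ((a ^ m - b ^ m : ℕ) : ℤ) = (a : ℤ) ^ m - (b : ℤ) ^ m := by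
    push_cast [Nat.pow_le_pow_left hab.le m]
    rfl
  obtain ⟨p, hp, hpn, hprim⟩ := exists_prime_dvd_pow_sub_pow_not_dvd (a := a) (b := b)
    (by exact_mod_cast hb) (by exact_mod_cast hab) (Nat.isCoprime_iff_coprime.2 hcop) hn
    (by exact_mod_cast hexc1) fun ⟨⟨s, hs⟩, h2⟩ => hexc2 ⟨⟨s, by exact_mod_cast hs⟩, h2⟩
  refine ⟨p, hp, ?_, fun m hm hmn h => hprim m hm hmn ?_⟩
  · rwa [← Int.natCast_dvd_natCast, hcast]
  · rwa [← hcast, Int.natCast_dvd_natCast]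
end

section
/- Let p be a prime, r a nonnegative integer with base-p digits r = Σ_{i=0}^{j} r_i p^i, and suppose there are distinct indices i₁, i₂ ∈ [0, j] and integers κ', κ'' ∈ [0, p−1] with C(κ', r_{i₁}) · C(κ'', r_{i₂}) ≡ −1 (mod p). Then for every positive integer k with k ≡ r + (κ' − r_{i₁}) p^{i₁} + (κ'' − r_{i₂}) p^{i₂} (mod p^{j+1}), we have C(k, r) ≡ −1 (mod p). -/
/-!
Replacing the base-`p` digits of `r` at positions `i₁` and `i₂` by `κ'` and `κ''` yields a
number `s` with `k ≡ s [MOD p ^ (j + 1)]`, so `k` and `s` share their lowest `j + 1` digits.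
Since `r < p ^ (j + 1)`, Lucas' theorem gives `C(k, r) ≡ ∏ᵢ C(sᵢ, rᵢ)`, and every factor
other than `C(κ', r_{i₁}) C(κ'', r_{i₂})` is `C(rᵢ, rᵢ) = 1`.
-/

open Finset

namespace Nat

def setDigit (p i d n : ℕ) : ℕ := n % p ^ i + p ^ i * (d + p * (n / p ^ (i + 1)))

theorem div_pow_mod_eq_of_modEq {p n l a b : ℕ} (h : a ≡ b [MOD p ^ n]) (hl : l < n) :
    a / p ^ l % p = b / p ^ l % p := by
  have h' : a ≡ b [MOD p ^ l * p] := h.of_dvd (pow_succ p l ▸ pow_dvd_pow p hl)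
  rw [← Nat.mod_mul_right_div_self, ← Nat.mod_mul_right_div_self b, h']

theorem setDigit_modEq (p i d n : ℕ) : setDigit p i d n ≡ n [MOD p ^ i] := by
  rw [setDigit, Nat.ModEq, Nat.add_mul_mod_self_left, Nat.mod_mod]

theorem setDigit_div_pow_self {p i d : ℕ} (n : ℕ) (hd : d < p) :
    setDigit p i d n / p ^ i = d + p * (n / p ^ (i + 1)) := by
  have hpos : 0 < p ^ i := pow_pos (zero_lt_of_lt hd) i
  rw [setDigit, Nat.add_mul_div_left _ _ hpos, Nat.div_eq_of_lt (Nat.mod_lt n hpos), zero_add]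

theorem setDigit_div_pow_self_mod {p i d : ℕ} (n : ℕ) (hd : d < p) :
    setDigit p i d n / p ^ i % p = d := by
  rw [setDigit_div_pow_self n hd, Nat.add_mul_mod_self_left, Nat.mod_eq_of_lt hd]

theorem setDigit_div_pow_succ {p i d : ℕ} (n : ℕ) (hd : d < p) :
    setDigit p i d n / p ^ (i + 1) = n / p ^ (i + 1) := by
  rw [pow_succ, ← Nat.div_div_eq_div_mul, setDigit_div_pow_self n hd,
    Nat.add_mul_div_left _ _ (zero_lt_of_lt hd), Nat.div_eq_of_lt hd, zero_add, pow_succ]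

theorem setDigit_div_pow_mod_of_ne {p i d l : ℕ} (n : ℕ) (hd : d < p) (hl : l ≠ i) :
    setDigit p i d n / p ^ l % p = n / p ^ l % p := by
  rcases Nat.lt_or_gt_of_ne hl with hlt | hgt
  · exact div_pow_mod_eq_of_modEq (setDigit_modEq p i d n) hlt
  · have hsplit : ∀ m, m / p ^ l = m / p ^ (i + 1) / p ^ (l - (i + 1)) := fun m => by
      rw [Nat.div_div_eq_div_mul, ← pow_add, Nat.add_sub_cancel' hgt]
    rw [hsplit, hsplit n, setDigit_div_pow_succ n hd]

theorem cast_setDigit (p i d n : ℕ) :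
    (setDigit p i d n : ℤ) = n + ((d : ℤ) - (n / p ^ i % p : ℕ)) * (p : ℤ) ^ i := by
  have hlow := Nat.mod_add_div n (p ^ i)
  have hhigh := Nat.mod_add_div (n / p ^ i) p
  rw [Nat.div_div_eq_div_mul, ← pow_succ] at hhigh
  have hlow' : (n : ℤ) = (n % p ^ i : ℕ) + (p : ℤ) ^ i * (n / p ^ i : ℕ) := by
    exact_mod_cast hlow.symm
  have hhigh' :
      ((n / p ^ i : ℕ) : ℤ) = (n / p ^ i % p : ℕ) + p * (n / p ^ (i + 1) : ℕ) := by
    exact_mod_cast hhigh.symm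
  simp only [setDigit, Nat.cast_add, Nat.cast_mul, Nat.cast_pow]
  linear_combination -hlow' - (p : ℤ) ^ i * hhigh'

theorem cast_choose_eq_prod_choose_digits_of_modEq {p : ℕ} [Fact p.Prime] {a k s r : ℕ}
    (hks : k ≡ s [MOD p ^ a]) (hr : r < p ^ a) :
    (k.choose r : ZMod p) =
      ∏ i ∈ range a, ((s / p ^ i % p).choose (r / p ^ i % p) : ZMod p) := by
  have lucas := (ZMod.intCast_eq_intCast_iff _ _ _).mpr
    (Choose.choose_modEq_choose_mul_prod_range_choose (n := k) (k := r) (p := p) a)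
  rw [Nat.div_eq_of_lt hr, Nat.choose_zero_right] at lucas
  push_cast at lucas
  rw [lucas, one_mul]
  refine prod_congr rfl fun i hi => ?_
  rw [div_pow_mod_eq_of_modEq hks (mem_range.mp hi)]

end Nat

open Nat

theorem stmt_6 (p : ℕ) (hp : p.Prime) (r j : ℕ) (hj : r < p ^ (j + 1))
    (i₁ i₂ : ℕ) (hi₁ : i₁ ≤ j) (hi₂ : i₂ ≤ j) (hne : i₁ ≠ i₂)
    (κ' κ'' : ℕ) (hκ' : κ' ≤ p - 1) (hκ'' : κ'' ≤ p - 1)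
    (hchoose : (Nat.choose κ' (r / p ^ i₁ % p) : ZMod p) *
      (Nat.choose κ'' (r / p ^ i₂ % p) : ZMod p) = -1) :
    ∀ k : ℕ, 0 < k →
      (k : ℤ) ≡ (r : ℤ) + ((κ' : ℤ) - (r / p ^ i₁ % p : ℕ)) * (p : ℤ) ^ i₁
        + ((κ'' : ℤ) - (r / p ^ i₂ % p : ℕ)) * (p : ℤ) ^ i₂
        [ZMOD (p : ℤ) ^ (j + 1)] →
      (Nat.choose k r : ZMod p) = -1 := by
  intro k _ hk
  have := Fact.mk hp
  have hκ'p : κ' < p := by have := hp.two_le; omega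
  have hκ''p : κ'' < p := by have := hp.two_le; omega
  set s := setDigit p i₂ κ'' (setDigit p i₁ κ' r)
  have hks : k ≡ s [MOD p ^ (j + 1)] := by
    rw [← Int.natCast_modEq_iff, cast_setDigit, cast_setDigit,
      setDigit_div_pow_mod_of_ne r hκ'p hne.symm]
    exact_mod_cast hk
  have hs₁ : s / p ^ i₁ % p = κ' := by
    rw [setDigit_div_pow_mod_of_ne _ hκ''p hne, setDigit_div_pow_self_mod r hκ'p]
  have hs₂ : s / p ^ i₂ % p = κ'' := setDigit_div_pow_self_mod _ hκ''p
  have hs : ∀ i, i ≠ i₁ → i ≠ i₂ → s / p ^ i % p = r / p ^ i % p := by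
    intro i h₁ h₂
    rw [setDigit_div_pow_mod_of_ne _ hκ''p h₂, setDigit_div_pow_mod_of_ne r hκ'p h₁]
  rw [cast_choose_eq_prod_choose_digits_of_modEq hks hj,
    prod_eq_mul i₁ i₂ hne (fun i _ hi => by rw [hs i hi.1 hi.2, choose_self, cast_one])
      (fun h => absurd (mem_range.mpr (by omega)) h)
      (fun h => absurd (mem_range.mpr (by omega)) h), hs₁, hs₂, hchoose]
end

section
/- For each ℓ ∈ {1, 2, 3, 4, 5, 6}, let p_ℓ be respectively 3, 5, 17, 257, 65537, 6700417, and let p_0 = 641. Then for every natural number n, the number 2^n is congruent to −1 modulo p_ℓ for some ℓ ∈ [1, 6] with n ≡ 2^{ℓ−1} (mod 2^ℓ), or 2^n ≡ 1 (mod 641) with n ≡ 0 (mod 64). -/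
lemma pow_mod_helper (p k n : ℕ) (h : (2 : ZMod p) ^ k = 1) (hk : 0 < k) :
    (2 : ZMod p) ^ n = (2 : ZMod p) ^ (n % k) := by
  conv_lhs => rw [← Nat.div_add_mod n k]
  rw [pow_add, pow_mul, h, one_pow, one_mul]

theorem stmt_8 (P : ℕ → ℕ)
    (hP : P 1 = 3 ∧ P 2 = 5 ∧ P 3 = 17 ∧ P 4 = 257 ∧ P 5 = 65537 ∧ P 6 = 6700417) :
    ∀ n : ℕ,
      (∃ ℓ : ℕ, 1 ≤ ℓ ∧ ℓ ≤ 6 ∧ n ≡ 2 ^ (ℓ - 1) [MOD 2 ^ ℓ] ∧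
        ((2 : ZMod (P ℓ)) ^ n = -1)) ∨
      (n ≡ 0 [MOD 64] ∧ (2 : ZMod 641) ^ n = 1) := by
  obtain ⟨h1, h2, h3, h4, h5, h6⟩ := hP
  intro n
  by_cases c1 : n % 2 = 1
  · left; exact ⟨1, le_refl _, by norm_num, by show n % 2 = 1 % 2; omega,
      by rw [h1, pow_mod_helper 3 2 n (by decide) (by norm_num), c1]; decide⟩
  by_cases c2 : n % 4 = 2
  · left; exact ⟨2, by norm_num, by norm_num, by show n % 4 = 2 % 4; omega,
      by rw [h2, pow_mod_helper 5 4 n (by decide) (by norm_num), c2]; decide⟩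
  by_cases c3 : n % 8 = 4
  · left; exact ⟨3, by norm_num, by norm_num, by show n % 8 = 4 % 8; omega,
      by rw [h3, pow_mod_helper 17 8 n (by decide) (by norm_num), c3]; decide⟩
  by_cases c4 : n % 16 = 8
  · left; exact ⟨4, by norm_num, by norm_num, by show n % 16 = 8 % 16; omega,
      by rw [h4, pow_mod_helper 257 16 n (by decide) (by norm_num), c4]; decide⟩
  by_cases c5 : n % 32 = 16
  · left; exact ⟨5, by norm_num, by norm_num, by show n % 32 = 16 % 32; omega,
      by rw [h5, pow_mod_helper 65537 32 n (by decide) (by norm_num), c5]; decide⟩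
  by_cases c6 : n % 64 = 32
  · left; exact ⟨6, by norm_num, by norm_num, by show n % 64 = 32 % 64; omega,
      by rw [h6, pow_mod_helper 6700417 64 n (by decide) (by norm_num), c6]; decide⟩
  · right
    have h0 : n % 64 = 0 := by omega
    exact ⟨by show n % 64 = 0 % 64; omega,
      by rw [pow_mod_helper 641 64 n (by decide) (by norm_num), h0]; decide⟩
end

section
/- Let r be an odd positive integer. Then there exist infinitely many positive integers k such that C(k, r) is a Sierpiński number, i.e., C(k, r) is odd and C(k, r) · 2^n + 1 is composite for every positive integer n. -/
/-!
Sierpiński's covering: the primes `3, 5, 17, 257, 65537` (the Fermat numbers `F₀, …, F₄`)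
and `641 ∣ F₅` satisfy `2 ^ 2 ^ j ≡ -1 (mod pⱼ)`, while `6700417 ∣ F₅` satisfies `2 ^ 64 ≡ 1`.
Hence if `s ≡ 1` modulo the first six primes and `s ≡ -1 (mod 6700417)`, then `s * 2 ^ n + 1`
is divisible by `pⱼ` when `2 ^ j` exactly divides `n` (`j ≤ 5`), and by `6700417` when
`2 ^ 6 ∣ n`.

It remains to make `C(k, r)` satisfy these congruences, and be odd, for infinitely many `k`. Modulo
a prime `p`, `C(k, r)` only depends on `k` modulo `p ^ (v_p(r!) + 1)`, because `r! * C(k, r)` is a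
polynomial in `k`; by the Chinese remainder theorem it therefore suffices to attain each residue
once. The residue `1` is attained at `k = r`, and `-1` modulo `6700417` via Lucas' theorem.
-/

open Nat

namespace Nat

theorem ModEq.descFactorial {N k k' : ℕ} (h : k ≡ k' [MOD N]) (j : ℕ) :
    k.descFactorial j ≡ k'.descFactorial j [MOD N] := by
  rw [← ZMod.natCast_eq_natCast_iff, ← descPochhammer_eval_eq_descFactorial,
    ← descPochhammer_eval_eq_descFactorial, (ZMod.natCast_eq_natCast_iff _ _ _).mpr h]

theorem ModEq.choose {r d u N k k' : ℕ} (hr : r ! = d * u) (hu : N.Coprime u)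
    (h : k ≡ k' [MOD d * N]) : k.choose r ≡ k'.choose r [MOD N] := by
  have hd : d ≠ 0 := left_ne_zero_of_mul (hr ▸ factorial_ne_zero r)
  have h' := h.descFactorial r
  rw [descFactorial_eq_factorial_mul_choose, descFactorial_eq_factorial_mul_choose, hr,
    mul_assoc, mul_assoc] at h'
  exact (ModEq.mul_left_cancel' hd h').cancel_left_of_coprime hu

theorem ModEq.choose_of_prime {p r k k' : ℕ} (hp : p.Prime)
    (h : k ≡ k' [MOD p ^ ((r !).factorization p + 1)]) : k.choose r ≡ k'.choose r [MOD p] :=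
  ModEq.choose (ordProj_mul_ordCompl_eq_self _ _).symm
    (coprime_ordCompl hp (factorial_ne_zero r)) (pow_succ p _ ▸ h)

theorem infinite_setOf_forall_choose_cast_eq (r : ℕ) {t : Finset ℕ} (ht : ∀ p ∈ t, p.Prime)
    (m : ℕ → ℕ) : {k : ℕ | ∀ p ∈ t, (k.choose r : ZMod p) = (m p).choose r}.Infinite := by
  set s : ℕ → ℕ := fun p => p ^ ((r !).factorization p + 1)
  obtain ⟨k₀, hk₀⟩ := chineseRemainderOfFinset m s t
    (fun p hp => pow_ne_zero _ (ht p hp).ne_zero)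
    (fun p hp p' hp' hne => coprime_pow_primes _ _ (ht p hp) (ht p' hp') hne)
  have hP : ∏ p ∈ t, s p ≠ 0 :=
    Finset.prod_ne_zero_iff.mpr fun p hp => pow_ne_zero _ (ht p hp).ne_zero
  refine Set.infinite_of_injective_forall_mem (f := fun j => k₀ + j * ∏ p ∈ t, s p)
    (fun i j (hij : k₀ + i * _ = k₀ + j * _) => mul_right_cancel₀ hP (add_left_cancel hij))
    fun j p hp => ?_
  have hper : k₀ ≡ k₀ + j * ∏ p ∈ t, s p [MOD s p] :=
    (modEq_iff_dvd' (Nat.le_add_right k₀ _)).mpr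
      (by simpa using dvd_mul_of_dvd_right (Finset.dvd_prod_of_mem s hp) j)
  exact (ZMod.natCast_eq_natCast_iff _ _ _).mpr
    (ModEq.choose_of_prime (ht p hp) (hper.symm.trans (hk₀ p hp)))

theorem choose_pred_cast_zmod {p : ℕ} [hp : Fact p.Prime] {j : ℕ} (hj : j < p) :
    ((p - 1).choose j : ZMod p) = (-1) ^ j := by
  induction j with
  | zero => simp
  | succ j ih =>
    have hpascal : p.choose (j + 1) = (p - 1).choose j + (p - 1).choose (j + 1) := by
      conv_lhs => rw [← Nat.sub_add_cancel hp.out.one_le]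
      exact choose_succ_succ _ _
    have hdvd : (p.choose (j + 1) : ZMod p) = 0 :=
      (ZMod.natCast_eq_zero_iff _ _).mpr (hp.out.dvd_choose_self j.succ_ne_zero hj)
    rw [hpascal, cast_add, ih (by omega)] at hdvd
    linear_combination hdvd

theorem choose_mul_add_cast_zmod {p : ℕ} [hp : Fact p.Prime] {a : ℕ} (ha : a < p) (m r : ℕ) :
    ((p * m + a).choose r : ZMod p) = a.choose (r % p) * m.choose (r / p) := by
  have h := Choose.choose_modEq_choose_mod_mul_choose_div_nat (n := p * m + a) (k := r) (p := p)
  rw [mul_add_mod, mod_eq_of_lt ha, mul_add_div hp.out.pos, div_eq_of_lt ha, add_zero] at h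
  exact_mod_cast (ZMod.natCast_eq_natCast_iff _ _ _).mpr h

/-- By Lucas' theorem, peeling off the last base-`q` digit of `r`: an odd digit is matched by the
digit `q - 1`, since `C(q - 1, j) ≡ (-1) ^ j`; otherwise the remaining digits form an odd number. -/
theorem exists_choose_cast_eq_neg_one {q : ℕ} [hq : Fact q.Prime] {r : ℕ} (hr : Odd r) :
    ∃ m : ℕ, (m.choose r : ZMod q) = -1 := by
  induction r using Nat.strong_induction_on with
  | _ r ih =>
  have hmod : r % q < q := mod_lt r hq.out.pos
  rcases even_or_odd (r % q) with heven | hodd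
  · have hdiv : Odd (r / q) := by
      have hsum : Odd (q * (r / q) + r % q) := (div_add_mod r q).symm ▸ hr
      exact (odd_mul.mp ((odd_add.mp hsum).mpr heven)).2
    obtain ⟨m, hm⟩ := ih (r / q) (div_lt_self hr.pos hq.out.one_lt) hdiv
    refine ⟨q * m + r % q, ?_⟩
    rw [choose_mul_add_cast_zmod hmod, choose_self, cast_one, one_mul, hm]
  · refine ⟨q * (r / q) + (q - 1), ?_⟩
    rw [choose_mul_add_cast_zmod (by omega), choose_pred_cast_zmod hmod, choose_self, cast_one,
      mul_one, hodd.neg_one_pow]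

theorem exists_dvd_mul_two_pow_add_one {J : ℕ} {p : Fin J → ℕ} {q s : ℕ}
    (hp : ∀ j, (2 : ZMod (p j)) ^ 2 ^ (j : ℕ) = -1) (hq : (2 : ZMod q) ^ 2 ^ J = 1)
    (hsp : ∀ j, (s : ZMod (p j)) = 1) (hsq : (s : ZMod q) = -1) (n : ℕ) :
    (∃ j, p j ∣ s * 2 ^ n + 1) ∨ q ∣ s * 2 ^ n + 1 := by
  simp_rw [← ZMod.natCast_eq_zero_iff]
  push_cast
  by_cases hn : 2 ^ J ∣ n
  · obtain ⟨c, rfl⟩ := hn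
    right
    rw [pow_mul, hq, one_pow, hsq]
    ring
  · have hn₀ : n ≠ 0 := by rintro rfl; exact hn (dvd_zero _)
    obtain ⟨j, c, hc, rfl⟩ := exists_eq_two_pow_mul_odd hn₀
    have hj : j < J := by
      by_contra! hJ
      exact hn (dvd_mul_of_dvd_left (pow_dvd_pow 2 hJ) c)
    left
    refine ⟨⟨j, hj⟩, ?_⟩
    rw [pow_mul, hp ⟨j, hj⟩, hc.neg_one_pow, hsp]
    ring

theorem not_prime_mul_two_pow_add_one {J : ℕ} {p : Fin J → ℕ} {q s : ℕ}
    (hp₂ : ∀ j, 2 ≤ p j) (hpq : ∀ j, p j ≤ q) (hq₂ : 2 ≤ q)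
    (hp : ∀ j, (2 : ZMod (p j)) ^ 2 ^ (j : ℕ) = -1) (hq : (2 : ZMod q) ^ 2 ^ J = 1)
    (hsp : ∀ j, (s : ZMod (p j)) = 1) (hsq : (s : ZMod q) = -1) {n : ℕ} (hn : n ≠ 0) :
    ¬ (s * 2 ^ n + 1).Prime := by
  have hqs : q ≤ s + 1 := le_of_dvd s.succ_pos <|
    (ZMod.natCast_eq_zero_iff _ _).mp (by push_cast; rw [hsq]; ring)
  have hs : s < s * 2 ^ n := lt_mul_of_one_lt_right (by omega) (Nat.one_lt_two_pow hn)
  rcases exists_dvd_mul_two_pow_add_one hp hq hsp hsq n with ⟨j, hj⟩ | hdvd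
  · exact not_prime_of_dvd_of_lt hj (hp₂ j) (by linarith [hpq j])
  · exact not_prime_of_dvd_of_lt hdvd hq₂ (by omega)

end Nat

theorem stmt_10_general (r : ℕ) (hodd : Odd r) :
    {k : ℕ | 0 < k ∧ Odd (Nat.choose k r) ∧
      ∀ n : ℕ, 0 < n →
        1 < Nat.choose k r * 2 ^ n + 1 ∧
        ¬ Nat.Prime (Nat.choose k r * 2 ^ n + 1)}.Infinite := by
  have : Fact (Nat.Prime 6700417) := ⟨by norm_num⟩
  obtain ⟨m₀, hm₀⟩ := exists_choose_cast_eq_neg_one (q := 6700417) hodd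
  have hinf := infinite_setOf_forall_choose_cast_eq r
    (t := {6700417, 2, 3, 5, 17, 257, 65537, 641}) (by norm_num)
    (fun p => if p = 6700417 then m₀ else r)
  refine (hinf.sdiff (Set.finite_singleton 0)).mono ?_
  rintro k ⟨hk, hk₀ : k ≠ 0⟩
  have hone : ∀ p ∈ ({2, 3, 5, 17, 257, 65537, 641} : Finset ℕ), (k.choose r : ZMod p) = 1 := by
    intro p hp
    have hpq : p ≠ 6700417 := by rintro rfl; simp at hp
    have h := hk p (Finset.mem_insert_of_mem hp)
    rwa [if_neg hpq, choose_self, cast_one] at h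
  have hchoose : Odd (k.choose r) := ZMod.natCast_eq_one_iff_odd.mp (hone 2 (by simp))
  refine ⟨pos_of_ne_zero hk₀, hchoose, fun n hn =>
    ⟨Nat.lt_add_of_pos_left (Nat.mul_pos hchoose.pos (Nat.two_pow_pos n)), ?_⟩⟩
  refine not_prime_mul_two_pow_add_one (p := ![3, 5, 17, 257, 65537, 641]) (q := 6700417)
    (by decide) (by decide) (by norm_num) (by decide) (by decide) (fun j => hone _ ?_)
    (by simpa [hm₀] using hk _ (Finset.mem_insert_self _ _)) hn.ne'
  fin_cases j <;> simp

theorem stmt_10 (r : ℕ) (hr : 0 < r) (hodd : Odd r) :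
    {k : ℕ | 0 < k ∧ Odd (Nat.choose k r) ∧
      ∀ n : ℕ, 0 < n →
        1 < Nat.choose k r * 2 ^ n + 1 ∧
        ¬ Nat.Prime (Nat.choose k r * 2 ^ n + 1)}.Infinite :=
  stmt_10_general r hodd
end

section
/- Let S(x) denote the number of positive integers r with 1 ≤ r ≤ x such that there exist infinitely many positive integers k for which C(k, r) is a Sierpiński number. Then S(x)/x → 1 as x tends to infinity. -/
open Classical in
noncomputable def sierpCount (x : ℕ) : ℕ :=
  ((Finset.Icc 1 x).filter (fun r =>
    {k : ℕ | 0 < k ∧ Odd (Nat.choose k r) ∧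
      ∀ n : ℕ, 0 < n →
        1 < Nat.choose k r * 2 ^ n + 1 ∧
        ¬ Nat.Prime (Nat.choose k r * 2 ^ n + 1)}.Infinite)).card

open Nat Filter



lemma lemB {p : ℕ} [Fact p.Prime] : ∀ (m r s t : ℕ), r < p ^ m → s < p ^ m →
    Nat.choose (s + p ^ m * t) r ≡ Nat.choose s r [MOD p] := by
  intro m
  induction m with
  | zero =>
    intro r s t hr hs
    simp only [pow_zero] at hr hs
    have h0 : r = 0 := by omega
    have hs0 : s = 0 := by omega
    subst h0; subst hs0; simp; rfl
  | succ m ih =>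
    intro r s t hr hs
    have hp := (Fact.out : p.Prime).two_le
    have key := @Choose.choose_modEq_choose_mod_mul_choose_div_nat (s + p^(m+1)*t) r p _
    have hpow : p ^ (m+1) = p * p ^ m := by ring
    have h1 : (s + p^(m+1)*t) % p = s % p := by
      rw [hpow, mul_assoc, Nat.add_mul_mod_self_left]
    have h2 : (s + p^(m+1)*t) / p = s / p + p ^ m * t := by
      rw [hpow, mul_assoc, Nat.add_mul_div_left _ _ (by omega : 0 < p)]
    rw [h1, h2] at key
    have hrlt : r / p < p ^ m := Nat.div_lt_of_lt_mul (by rwa [← hpow])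
    have hslt : s / p < p ^ m := Nat.div_lt_of_lt_mul (by rwa [← hpow])
    have key2 := @Choose.choose_modEq_choose_mod_mul_choose_div_nat s r p _
    exact key.trans (((ih (r/p) (s/p) t hrlt hslt).mul_left _).trans key2.symm)

lemma lemC {p : ℕ} [Fact p.Prime] {a : ℕ} (ha : a < p) (ha1 : 1 ≤ a) :
    ∀ (j r : ℕ), r / p ^ j % p = 1 →
    Nat.choose (r + (a - 1) * p ^ j) r ≡ a [MOD p] := by
  intro j
  induction j with
  | zero =>
    intro r hd
    simp only [pow_zero, Nat.div_one] at hd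
    have hp := (Fact.out : p.Prime).two_le
    have hdm := Nat.div_add_mod r p
    have key := @Choose.choose_modEq_choose_mod_mul_choose_div_nat (r + (a-1)*1) r p _
    have heq : r + (a-1)*1 = a + p * (r / p) := by omega
    have h1 : (r + (a-1)*1) % p = a := by
      rw [heq, Nat.add_mul_mod_self_left, Nat.mod_eq_of_lt ha]
    have h2 : (r + (a-1)*1) / p = r / p := by
      rw [heq, Nat.add_mul_div_left _ _ (by omega : 0 < p), Nat.div_eq_of_lt ha]; omega
    rw [h1, h2, hd, Nat.choose_self, mul_one, Nat.choose_one_right] at key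
    simpa using key
  | succ j ih =>
    intro r hd
    have hp := (Fact.out : p.Prime).two_le
    have key := @Choose.choose_modEq_choose_mod_mul_choose_div_nat (r + (a-1)*p^(j+1)) r p _
    have hpow : (a-1) * p ^ (j+1) = ((a-1) * p ^ j) * p := by ring
    have h1 : (r + (a-1)*p^(j+1)) % p = r % p := by
      rw [hpow, Nat.add_mul_mod_self_right]
    have h2 : (r + (a-1)*p^(j+1)) / p = r / p + (a-1) * p ^ j := by
      rw [hpow, Nat.add_mul_div_right _ _ (by omega : 0 < p)]
    rw [h1, h2, Nat.choose_self, one_mul] at key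
    have hd2 : (r / p) / p ^ j % p = 1 := by
      rw [Nat.div_div_eq_div_mul, ← Nat.pow_succ']; exact hd
    exact key.trans (ih (r/p) hd2)





lemma keyDvd (p c s n : ℕ) (hs : s ≡ 78557 [MOD p]) (h36 : 2 ^ 36 ≡ 1 [MOD p])
    (hm : n % 36 = c) (hc : (78557 * 2 ^ c + 1) % p = 0) (hp2 : 2 ≤ p) (hp73 : p ≤ 73)
    (hbig : 78557 ≤ s) : ¬ Nat.Prime (s * 2 ^ n + 1) := by
  have hn : n = 36 * (n / 36) + c := by omega
  have h2n : (2:ℕ) ^ n ≡ 2 ^ c [MOD p] := by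
    rw [hn, pow_add, pow_mul]
    calc ((2:ℕ)^36)^(n/36) * 2^c ≡ 1^(n/36) * 2^c [MOD p] := (h36.pow _).mul_right _
    _ = 2 ^ c := by ring
  have hall : s * 2 ^ n + 1 ≡ 78557 * 2 ^ c + 1 [MOD p] := (hs.mul h2n).add_right 1
  have hdvd : p ∣ s * 2 ^ n + 1 := by
    have : (s * 2 ^ n + 1) % p = 0 := by
      have := hall; unfold Nat.ModEq at this; omega
    omega
  intro hprime
  rcases (Nat.Prime.eq_one_or_self_of_dvd hprime p hdvd) with h | h
  · omega
  · have h2 : (1:ℕ) ≤ 2 ^ n := Nat.one_le_two_pow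
    nlinarith [Nat.one_le_two_pow (n := n)]

lemma coverNotPrime (s n : ℕ)
    (hmod : ∀ p ∈ ({3,5,7,13,19,37,73} : Finset ℕ), s ≡ 78557 [MOD p])
    (hbig : 78557 ≤ s) : ¬ Nat.Prime (s * 2 ^ n + 1) := by
  obtain ⟨m, hmlt, hm⟩ : ∃ m, m < 36 ∧ n % 36 = m := ⟨n % 36, by omega, rfl⟩
  interval_cases m
  · exact keyDvd 3 0 s n (hmod 3 (by decide)) (by decide) hm (by decide) (by decide) (by decide) hbig
  · exact keyDvd 5 1 s n (hmod 5 (by decide)) (by decide) hm (by decide) (by decide) (by decide) hbig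
  · exact keyDvd 3 2 s n (hmod 3 (by decide)) (by decide) hm (by decide) (by decide) (by decide) hbig
  · exact keyDvd 73 3 s n (hmod 73 (by decide)) (by decide) hm (by decide) (by decide) (by decide) hbig
  · exact keyDvd 3 4 s n (hmod 3 (by decide)) (by decide) hm (by decide) (by decide) (by decide) hbig
  · exact keyDvd 5 5 s n (hmod 5 (by decide)) (by decide) hm (by decide) (by decide) (by decide) hbig
  · exact keyDvd 3 6 s n (hmod 3 (by decide)) (by decide) hm (by decide) (by decide) (by decide) hbig
  · exact keyDvd 7 7 s n (hmod 7 (by decide)) (by decide) hm (by decide) (by decide) (by decide) hbig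
  · exact keyDvd 3 8 s n (hmod 3 (by decide)) (by decide) hm (by decide) (by decide) (by decide) hbig
  · exact keyDvd 5 9 s n (hmod 5 (by decide)) (by decide) hm (by decide) (by decide) (by decide) hbig
  · exact keyDvd 3 10 s n (hmod 3 (by decide)) (by decide) hm (by decide) (by decide) (by decide) hbig
  · exact keyDvd 13 11 s n (hmod 13 (by decide)) (by decide) hm (by decide) (by decide) (by decide) hbig
  · exact keyDvd 3 12 s n (hmod 3 (by decide)) (by decide) hm (by decide) (by decide) (by decide) hbig
  · exact keyDvd 5 13 s n (hmod 5 (by decide)) (by decide) hm (by decide) (by decide) (by decide) hbig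
  · exact keyDvd 3 14 s n (hmod 3 (by decide)) (by decide) hm (by decide) (by decide) (by decide) hbig
  · exact keyDvd 19 15 s n (hmod 19 (by decide)) (by decide) hm (by decide) (by decide) (by decide) hbig
  · exact keyDvd 3 16 s n (hmod 3 (by decide)) (by decide) hm (by decide) (by decide) (by decide) hbig
  · exact keyDvd 5 17 s n (hmod 5 (by decide)) (by decide) hm (by decide) (by decide) (by decide) hbig
  · exact keyDvd 3 18 s n (hmod 3 (by decide)) (by decide) hm (by decide) (by decide) (by decide) hbig
  · exact keyDvd 7 19 s n (hmod 7 (by decide)) (by decide) hm (by decide) (by decide) (by decide) hbig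
  · exact keyDvd 3 20 s n (hmod 3 (by decide)) (by decide) hm (by decide) (by decide) (by decide) hbig
  · exact keyDvd 5 21 s n (hmod 5 (by decide)) (by decide) hm (by decide) (by decide) (by decide) hbig
  · exact keyDvd 3 22 s n (hmod 3 (by decide)) (by decide) hm (by decide) (by decide) (by decide) hbig
  · exact keyDvd 13 23 s n (hmod 13 (by decide)) (by decide) hm (by decide) (by decide) (by decide) hbig
  · exact keyDvd 3 24 s n (hmod 3 (by decide)) (by decide) hm (by decide) (by decide) (by decide) hbig
  · exact keyDvd 5 25 s n (hmod 5 (by decide)) (by decide) hm (by decide) (by decide) (by decide) hbig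
  · exact keyDvd 3 26 s n (hmod 3 (by decide)) (by decide) hm (by decide) (by decide) (by decide) hbig
  · exact keyDvd 37 27 s n (hmod 37 (by decide)) (by decide) hm (by decide) (by decide) (by decide) hbig
  · exact keyDvd 3 28 s n (hmod 3 (by decide)) (by decide) hm (by decide) (by decide) (by decide) hbig
  · exact keyDvd 5 29 s n (hmod 5 (by decide)) (by decide) hm (by decide) (by decide) (by decide) hbig
  · exact keyDvd 3 30 s n (hmod 3 (by decide)) (by decide) hm (by decide) (by decide) (by decide) hbig
  · exact keyDvd 7 31 s n (hmod 7 (by decide)) (by decide) hm (by decide) (by decide) (by decide) hbig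
  · exact keyDvd 3 32 s n (hmod 3 (by decide)) (by decide) hm (by decide) (by decide) (by decide) hbig
  · exact keyDvd 5 33 s n (hmod 5 (by decide)) (by decide) hm (by decide) (by decide) (by decide) hbig
  · exact keyDvd 3 34 s n (hmod 3 (by decide)) (by decide) hm (by decide) (by decide) (by decide) hbig
  · exact keyDvd 13 35 s n (hmod 13 (by decide)) (by decide) hm (by decide) (by decide) (by decide) hbig

lemma lemBmod {p : ℕ} [Fact p.Prime] {m r s k : ℕ} (hr : r < p ^ m) (hs : s < p ^ m)
    (hk : k ≡ s [MOD p ^ m]) (hks : s ≤ k) : Nat.choose k r ≡ Nat.choose s r [MOD p] := by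
  obtain ⟨c, hc⟩ := (Nat.modEq_iff_dvd' hks).mp hk.symm
  have hkeq : k = s + p ^ m * c := by omega
  rw [hkeq]
  exact lemB m r s c hr hs

lemma perPrime {p : ℕ} [Fact p.Prime] {r j a : ℕ} (ha : a < p) (ha1 : 1 ≤ a)
    (hj : r / p ^ j % p = 1) :
    ∃ s m, r ≤ s ∧ s < p ^ m ∧
      ∀ k, k ≡ s [MOD p ^ m] → s ≤ k → Nat.choose k r ≡ a [MOD p] := by
  have hp1 : 1 < p := (Fact.out : p.Prime).one_lt
  refine ⟨r + (a - 1) * p ^ j, r + (a - 1) * p ^ j, Nat.le_add_right _ _,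
    Nat.lt_pow_self hp1, fun k hk hks => ?_⟩
  exact (lemBmod (lt_of_le_of_lt (Nat.le_add_right _ _) (Nat.lt_pow_self hp1))
    (Nat.lt_pow_self hp1) hk hks).trans (lemC ha ha1 j r hj)

lemma perTwo {r : ℕ} :
    ∃ s m, r ≤ s ∧ s < 2 ^ m ∧
      ∀ k, k ≡ s [MOD 2 ^ m] → s ≤ k → Nat.choose k r ≡ 1 [MOD 2] := by
  refine ⟨r, r, le_refl r, Nat.lt_pow_self one_lt_two, fun k hk hks => ?_⟩
  have := lemBmod (p := 2) (Nat.lt_pow_self (n := r) one_lt_two) (Nat.lt_pow_self (n := r) one_lt_two) hk hks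
  rwa [Nat.choose_self] at this

set_option maxHeartbeats 1000000 in
lemma goodInfinite (r : ℕ) (hr : 0 < r)
    (h3 : ∃ j, r / 3 ^ j % 3 = 1)
    (h5 : ∃ j, r / 5 ^ j % 5 = 1)
    (h7 : ∃ j, r / 7 ^ j % 7 = 1)
    (h13 : ∃ j, r / 13 ^ j % 13 = 1)
    (h19 : ∃ j, r / 19 ^ j % 19 = 1)
    (h37 : ∃ j, r / 37 ^ j % 37 = 1)
    (h73 : ∃ j, r / 73 ^ j % 73 = 1) :
    {k : ℕ | 0 < k ∧ Odd (Nat.choose k r) ∧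
      ∀ n : ℕ, 0 < n →
        1 < Nat.choose k r * 2 ^ n + 1 ∧
        ¬ Nat.Prime (Nat.choose k r * 2 ^ n + 1)}.Infinite := by
  obtain ⟨j3, hj3⟩ := h3
  obtain ⟨j5, hj5⟩ := h5
  obtain ⟨j7, hj7⟩ := h7
  obtain ⟨j13, hj13⟩ := h13
  obtain ⟨j19, hj19⟩ := h19
  obtain ⟨j37, hj37⟩ := h37
  obtain ⟨j73, hj73⟩ := h73
  haveI : Fact (Nat.Prime 3) := ⟨by norm_num⟩
  haveI : Fact (Nat.Prime 5) := ⟨by norm_num⟩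
  haveI : Fact (Nat.Prime 7) := ⟨by norm_num⟩
  haveI : Fact (Nat.Prime 13) := ⟨by norm_num⟩
  haveI : Fact (Nat.Prime 19) := ⟨by norm_num⟩
  haveI : Fact (Nat.Prime 37) := ⟨by norm_num⟩
  haveI : Fact (Nat.Prime 73) := ⟨by norm_num⟩
  obtain ⟨s2, m2, hle2, hlt2, hk2⟩ := perTwo (r := r)
  obtain ⟨s3, m3, hle3, hlt3, hk3⟩ := perPrime (p := 3) (a := 2) (by norm_num) (by norm_num) hj3
  obtain ⟨s5, m5, hle5, hlt5, hk5⟩ := perPrime (p := 5) (a := 2) (by norm_num) (by norm_num) hj5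
  obtain ⟨s7, m7, hle7, hlt7, hk7⟩ := perPrime (p := 7) (a := 3) (by norm_num) (by norm_num) hj7
  obtain ⟨s13, m13, hle13, hlt13, hk13⟩ := perPrime (p := 13) (a := 11) (by norm_num) (by norm_num) hj13
  obtain ⟨s19, m19, hle19, hlt19, hk19⟩ := perPrime (p := 19) (a := 11) (by norm_num) (by norm_num) hj19
  obtain ⟨s37, m37, hle37, hlt37, hk37⟩ := perPrime (p := 37) (a := 6) (by norm_num) (by norm_num) hj37
  obtain ⟨s73, m73, hle73, hlt73, hk73⟩ := perPrime (p := 73) (a := 9) (by norm_num) (by norm_num) hj73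
  set l : List (ℕ × ℕ) := [(2^m2, s2), (3^m3, s3), (5^m5, s5), (7^m7, s7), (13^m13, s13), (19^m19, s19), (37^m37, s37), (73^m73, s73)] with hl
  have hpair : l.Pairwise (Function.onFun Nat.Coprime Prod.fst) := by
    have cop : ∀ p q : ℕ, Nat.Prime p → Nat.Prime q → p ≠ q → ∀ a b : ℕ,
        Nat.Coprime (p ^ a) (q ^ b) := fun p q hp hq hne a b =>
      Nat.Coprime.pow _ _ ((Nat.coprime_primes hp hq).mpr hne)
    simp only [hl, List.pairwise_cons, List.mem_cons, List.not_mem_nil, or_false,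
      List.Pairwise.nil, and_true, Function.onFun]
    norm_num
    constructorm* _ ∧ _ <;>
      exact cop _ _ (by norm_num) (by norm_num) (by norm_num) _ _
  obtain ⟨k0, hk0⟩ := Nat.chineseRemainderOfList Prod.snd Prod.fst l hpair
  set N : ℕ := 2^m2*3^m3*5^m5*7^m7*13^m13*19^m19*37^m37*73^m73 with hN
  set B : ℕ := s2+s3+s5+s7+s13+s19+s37+s73+1 with hB
  have hN1 : 0 < N := by rw [hN]; positivity
  have hdvd2 : (2:ℕ)^m2 ∣ N := ⟨3^m3*5^m5*7^m7*13^m13*19^m19*37^m37*73^m73, by rw [hN]; ring⟩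
  have hdvd3 : (3:ℕ)^m3 ∣ N := ⟨2^m2*5^m5*7^m7*13^m13*19^m19*37^m37*73^m73, by rw [hN]; ring⟩
  have hdvd5 : (5:ℕ)^m5 ∣ N := ⟨2^m2*3^m3*7^m7*13^m13*19^m19*37^m37*73^m73, by rw [hN]; ring⟩
  have hdvd7 : (7:ℕ)^m7 ∣ N := ⟨2^m2*3^m3*5^m5*13^m13*19^m19*37^m37*73^m73, by rw [hN]; ring⟩
  have hdvd13 : (13:ℕ)^m13 ∣ N := ⟨2^m2*3^m3*5^m5*7^m7*19^m19*37^m37*73^m73, by rw [hN]; ring⟩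
  have hdvd19 : (19:ℕ)^m19 ∣ N := ⟨2^m2*3^m3*5^m5*7^m7*13^m13*37^m37*73^m73, by rw [hN]; ring⟩
  have hdvd37 : (37:ℕ)^m37 ∣ N := ⟨2^m2*3^m3*5^m5*7^m7*13^m13*19^m19*73^m73, by rw [hN]; ring⟩
  have hdvd73 : (73:ℕ)^m73 ∣ N := ⟨2^m2*3^m3*5^m5*7^m7*13^m13*19^m19*37^m37, by rw [hN]; ring⟩
  have hmem2 : ((2:ℕ)^m2, s2) ∈ l := by simp [hl]
  have hmem3 : ((3:ℕ)^m3, s3) ∈ l := by simp [hl]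
  have hmem5 : ((5:ℕ)^m5, s5) ∈ l := by simp [hl]
  have hmem7 : ((7:ℕ)^m7, s7) ∈ l := by simp [hl]
  have hmem13 : ((13:ℕ)^m13, s13) ∈ l := by simp [hl]
  have hmem19 : ((19:ℕ)^m19, s19) ∈ l := by simp [hl]
  have hmem37 : ((37:ℕ)^m37, s37) ∈ l := by simp [hl]
  have hmem73 : ((73:ℕ)^m73, s73) ∈ l := by simp [hl]
  set f : ℕ → ℕ := fun i => k0 + N * (B + i) with hf
  have hmono : StrictMono f := by
    intro i j hij
    simp only [hf]
    exact Nat.add_lt_add_left (mul_lt_mul_of_pos_left (Nat.add_lt_add_left hij B) hN1) k0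
  apply Set.infinite_of_injective_forall_mem hmono.injective
  intro i
  have hfB : B + i ≤ f i := by
    rw [hf]
    calc B + i ≤ N * (B + i) := Nat.le_mul_of_pos_left _ hN1
    _ ≤ k0 + N * (B + i) := Nat.le_add_left _ _
  have hcong2 : f i ≡ s2 [MOD 2^m2] := by
    have h0 : N * (B + i) ≡ 0 [MOD 2^m2] := Nat.modEq_zero_iff_dvd.mpr (hdvd2.mul_right _)
    have h1 := (Nat.ModEq.refl k0).add h0
    rw [Nat.add_zero] at h1
    exact h1.trans (hk0 _ hmem2)
  have hcong3 : f i ≡ s3 [MOD 3^m3] := by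
    have h0 : N * (B + i) ≡ 0 [MOD 3^m3] := Nat.modEq_zero_iff_dvd.mpr (hdvd3.mul_right _)
    have h1 := (Nat.ModEq.refl k0).add h0
    rw [Nat.add_zero] at h1
    exact h1.trans (hk0 _ hmem3)
  have hcong5 : f i ≡ s5 [MOD 5^m5] := by
    have h0 : N * (B + i) ≡ 0 [MOD 5^m5] := Nat.modEq_zero_iff_dvd.mpr (hdvd5.mul_right _)
    have h1 := (Nat.ModEq.refl k0).add h0
    rw [Nat.add_zero] at h1
    exact h1.trans (hk0 _ hmem5)
  have hcong7 : f i ≡ s7 [MOD 7^m7] := by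
    have h0 : N * (B + i) ≡ 0 [MOD 7^m7] := Nat.modEq_zero_iff_dvd.mpr (hdvd7.mul_right _)
    have h1 := (Nat.ModEq.refl k0).add h0
    rw [Nat.add_zero] at h1
    exact h1.trans (hk0 _ hmem7)
  have hcong13 : f i ≡ s13 [MOD 13^m13] := by
    have h0 : N * (B + i) ≡ 0 [MOD 13^m13] := Nat.modEq_zero_iff_dvd.mpr (hdvd13.mul_right _)
    have h1 := (Nat.ModEq.refl k0).add h0
    rw [Nat.add_zero] at h1
    exact h1.trans (hk0 _ hmem13)
  have hcong19 : f i ≡ s19 [MOD 19^m19] := by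
    have h0 : N * (B + i) ≡ 0 [MOD 19^m19] := Nat.modEq_zero_iff_dvd.mpr (hdvd19.mul_right _)
    have h1 := (Nat.ModEq.refl k0).add h0
    rw [Nat.add_zero] at h1
    exact h1.trans (hk0 _ hmem19)
  have hcong37 : f i ≡ s37 [MOD 37^m37] := by
    have h0 : N * (B + i) ≡ 0 [MOD 37^m37] := Nat.modEq_zero_iff_dvd.mpr (hdvd37.mul_right _)
    have h1 := (Nat.ModEq.refl k0).add h0
    rw [Nat.add_zero] at h1
    exact h1.trans (hk0 _ hmem37)
  have hcong73 : f i ≡ s73 [MOD 73^m73] := by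
    have h0 : N * (B + i) ≡ 0 [MOD 73^m73] := Nat.modEq_zero_iff_dvd.mpr (hdvd73.mul_right _)
    have h1 := (Nat.ModEq.refl k0).add h0
    rw [Nat.add_zero] at h1
    exact h1.trans (hk0 _ hmem73)
  have hge2 : s2 ≤ f i := le_trans (by rw [hB]; omega) hfB
  have hge3 : s3 ≤ f i := le_trans (by rw [hB]; omega) hfB
  have hge5 : s5 ≤ f i := le_trans (by rw [hB]; omega) hfB
  have hge7 : s7 ≤ f i := le_trans (by rw [hB]; omega) hfB
  have hge13 : s13 ≤ f i := le_trans (by rw [hB]; omega) hfB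
  have hge19 : s19 ≤ f i := le_trans (by rw [hB]; omega) hfB
  have hge37 : s37 ≤ f i := le_trans (by rw [hB]; omega) hfB
  have hge73 : s73 ≤ f i := le_trans (by rw [hB]; omega) hfB
  have hc2 := hk2 (f i) hcong2 hge2
  have hc3 : Nat.choose (f i) r ≡ 78557 [MOD 3] := (hk3 (f i) hcong3 hge3).trans (by decide)
  have hc5 : Nat.choose (f i) r ≡ 78557 [MOD 5] := (hk5 (f i) hcong5 hge5).trans (by decide)
  have hc7 : Nat.choose (f i) r ≡ 78557 [MOD 7] := (hk7 (f i) hcong7 hge7).trans (by decide)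
  have hc13 : Nat.choose (f i) r ≡ 78557 [MOD 13] := (hk13 (f i) hcong13 hge13).trans (by decide)
  have hc19 : Nat.choose (f i) r ≡ 78557 [MOD 19] := (hk19 (f i) hcong19 hge19).trans (by decide)
  have hc37 : Nat.choose (f i) r ≡ 78557 [MOD 37] := (hk37 (f i) hcong37 hge37).trans (by decide)
  have hc73 : Nat.choose (f i) r ≡ 78557 [MOD 73] := (hk73 (f i) hcong73 hge73).trans (by decide)
  have hOdd : Odd (Nat.choose (f i) r) := by
    rw [Nat.odd_iff]
    have h2 := hc2
    unfold Nat.ModEq at h2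
    omega
  have h15 := (Nat.modEq_and_modEq_iff_modEq_mul (by norm_num)).mp ⟨hc3, hc5⟩
  have h105 := (Nat.modEq_and_modEq_iff_modEq_mul (by norm_num)).mp ⟨h15, hc7⟩
  have h1365 := (Nat.modEq_and_modEq_iff_modEq_mul (by norm_num)).mp ⟨h105, hc13⟩
  have h25935 := (Nat.modEq_and_modEq_iff_modEq_mul (by norm_num)).mp ⟨h1365, hc19⟩
  have h959595 := (Nat.modEq_and_modEq_iff_modEq_mul (by norm_num)).mp ⟨h25935, hc37⟩
  have hM := (Nat.modEq_and_modEq_iff_modEq_mul (by norm_num)).mp ⟨h959595, hc73⟩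
  have hMeq : Nat.choose (f i) r % 70050435 = 78557 := by
    unfold Nat.ModEq at hM
    norm_num at hM
    exact hM
  have hbig : 78557 ≤ Nat.choose (f i) r := hMeq ▸ Nat.mod_le _ _
  have hpos : 0 < f i := by omega
  refine ⟨hpos, hOdd, fun n hn => ⟨?_, ?_⟩⟩
  · have h2n : 1 ≤ 2^n := Nat.one_le_two_pow
    nlinarith
  · apply coverNotPrime
    · intro p hp
      fin_cases hp
      exacts [hc3, hc5, hc7, hc13, hc19, hc37, hc73]
    · exact hbig




open Classical in
lemma badBound (p : ℕ) (hp : 2 ≤ p) : ∀ n : ℕ,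
    ((Finset.range (p ^ n)).filter (fun r => ∀ j, r / p ^ j % p ≠ 1)).card ≤ (p - 1) ^ n := by
  intro n
  induction n with
  | zero =>
    simp only [pow_zero]
    apply le_trans (Finset.card_filter_le _ _)
    simp
  | succ n ih =>
    classical
    set X := ((Finset.range p).filter (fun a => a ≠ 1)) ×ˢ
      ((Finset.range (p ^ n)).filter (fun r => ∀ j, r / p ^ j % p ≠ 1)) with hX
    have hmap : ∀ r ∈ (Finset.range (p ^ (n+1))).filter (fun r => ∀ j, r / p ^ j % p ≠ 1),
        (r % p, r / p) ∈ X := by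
      intro r hr
      rw [Finset.mem_filter, Finset.mem_range] at hr
      obtain ⟨hlt, hbad⟩ := hr
      rw [hX, Finset.mem_product, Finset.mem_filter, Finset.mem_filter, Finset.mem_range,
        Finset.mem_range]
      refine ⟨⟨Nat.mod_lt _ (by omega), by simpa using hbad 0⟩, ?_, fun j => ?_⟩
      · apply Nat.div_lt_of_lt_mul
        rw [← pow_succ']
        exact hlt
      · rw [Nat.div_div_eq_div_mul, ← pow_succ']
        exact hbad (j + 1)
    have hinj : ∀ r ∈ (Finset.range (p ^ (n+1))).filter (fun r => ∀ j, r / p ^ j % p ≠ 1),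
        ∀ s ∈ (Finset.range (p ^ (n+1))).filter (fun r => ∀ j, r / p ^ j % p ≠ 1),
        (r % p, r / p) = (s % p, s / p) → r = s := by
      intro r _ s _ h
      rw [Prod.mk.injEq] at h
      obtain ⟨ha, hb⟩ := h
      have e1 : r = p * (r / p) + r % p := (Nat.div_add_mod r p).symm
      rw [ha, hb] at e1
      have e2 := Nat.div_add_mod s p
      omega
    have hcard := Finset.card_le_card_of_injOn _ hmap hinj
    apply le_trans hcard
    rw [hX, Finset.card_product, Finset.filter_ne', Finset.card_erase_of_mem (by
      simp only [Finset.mem_range]; omega)]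
    rw [Finset.card_range, pow_succ]
    calc (p - 1) * _ ≤ (p-1) * (p-1)^n := Nat.mul_le_mul_left _ ih
    _ = (p-1)^n * (p-1) := by ring

open Classical in
lemma badLeX (p x : ℕ) (hp : 2 ≤ p) :
    ((Finset.Icc 1 x).filter (fun r => ∀ j, r / p ^ j % p ≠ 1)).card ≤
      (p - 1) ^ (Nat.log p x + 1) := by
  apply le_trans _ (badBound p hp (Nat.log p x + 1))
  apply Finset.card_le_card
  intro r hr
  rw [Finset.mem_filter] at hr ⊢
  refine ⟨Finset.mem_range.mpr ?_, hr.2⟩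
  have h1 := Finset.mem_Icc.mp hr.1
  exact lt_of_le_of_lt h1.2 (Nat.lt_pow_succ_log_self (by omega) x)

lemma logTendsto (p : ℕ) (hp : 2 ≤ p) : Tendsto (Nat.log p) atTop atTop := by
  rw [tendsto_atTop_atTop]
  intro b
  refine ⟨p ^ b, fun x hx => ?_⟩
  have hx0 : x ≠ 0 := by
    have : 0 < p ^ b := Nat.pow_pos (by omega)
    omega
  rwa [Nat.le_log_iff_pow_le (by omega) hx0]

open Classical in
lemma badTend (p : ℕ) (hp : 2 ≤ p) :
    Tendsto (fun x : ℕ =>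
      (((Finset.Icc 1 x).filter (fun r => ∀ j, r / p ^ j % p ≠ 1)).card : ℝ) / x)
      atTop (nhds 0) := by
  have h2p : (2:ℝ) ≤ p := by exact_mod_cast hp
  have hq0 : (0:ℝ) ≤ ((p:ℝ) - 1) / p := div_nonneg (by linarith) (by linarith)
  have hq1 : ((p:ℝ) - 1) / p < 1 := by
    rw [div_lt_one (by positivity)]
    linarith
  have hg : Tendsto (fun x : ℕ => ((p:ℝ) - 1) * (((p:ℝ) - 1) / p) ^ (Nat.log p x))
      atTop (nhds 0) := by
    rw [show (0:ℝ) = ((p:ℝ)-1) * 0 by ring]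
    exact ((tendsto_pow_atTop_nhds_zero_of_lt_one hq0 hq1).comp (logTendsto p hp)).const_mul _
  apply squeeze_zero (fun x => by positivity) _ hg
  intro x
  rcases Nat.eq_zero_or_pos x with rfl | hx
  · rw [show Finset.Icc 1 0 = (∅ : Finset ℕ) from rfl]
    simp only [Finset.filter_empty, Finset.card_empty, Nat.cast_zero, zero_div]
    exact mul_nonneg (by linarith) (pow_nonneg hq0 _)
  · set L := Nat.log p x with hL
    have hnum : (((Finset.Icc 1 x).filter (fun r => ∀ j, r / p ^ j % p ≠ 1)).card : ℝ) ≤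
        ((p:ℝ) - 1) ^ (L + 1) := by
      have := badLeX p x hp
      have hcast : (((p:ℕ) - 1 : ℕ) : ℝ) = (p:ℝ) - 1 := by
        have : (1:ℕ) ≤ p := by omega
        push_cast [this]
        ring
      calc (((Finset.Icc 1 x).filter (fun r => ∀ j, r / p ^ j % p ≠ 1)).card : ℝ)
          ≤ (((p - 1 : ℕ) : ℝ)) ^ (L + 1) := by exact_mod_cast this
      _ = ((p:ℝ) - 1) ^ (L + 1) := by rw [hcast]
    have hden : ((p:ℝ)) ^ L ≤ x := by
      exact_mod_cast Nat.pow_log_le_self p (by omega)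
    calc (((Finset.Icc 1 x).filter (fun r => ∀ j, r / p ^ j % p ≠ 1)).card : ℝ) / x
        ≤ ((p:ℝ) - 1) ^ (L + 1) / (p:ℝ) ^ L := by
          apply div_le_div₀ (pow_nonneg (by linarith) _) hnum (by positivity) hden
    _ = ((p:ℝ) - 1) * (((p:ℝ) - 1) / p) ^ L := by
          rw [div_pow, pow_succ]
          field_simp


open Classical in
lemma lowerBound (x : ℕ) : x ≤ sierpCount x +
    (((Finset.Icc 1 x).filter (fun r => ∀ j : ℕ, r / 3 ^ j % 3 ≠ 1)).card +
     ((Finset.Icc 1 x).filter (fun r => ∀ j : ℕ, r / 5 ^ j % 5 ≠ 1)).card +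
     ((Finset.Icc 1 x).filter (fun r => ∀ j : ℕ, r / 7 ^ j % 7 ≠ 1)).card +
     ((Finset.Icc 1 x).filter (fun r => ∀ j : ℕ, r / 13 ^ j % 13 ≠ 1)).card +
     ((Finset.Icc 1 x).filter (fun r => ∀ j : ℕ, r / 19 ^ j % 19 ≠ 1)).card +
     ((Finset.Icc 1 x).filter (fun r => ∀ j : ℕ, r / 37 ^ j % 37 ≠ 1)).card +
     ((Finset.Icc 1 x).filter (fun r => ∀ j : ℕ, r / 73 ^ j % 73 ≠ 1)).card) := by
  classical
  rw [sierpCount]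
  set F := (Finset.Icc 1 x).filter (fun r =>
    {k : ℕ | 0 < k ∧ Odd (Nat.choose k r) ∧
      ∀ n : ℕ, 0 < n →
        1 < Nat.choose k r * 2 ^ n + 1 ∧
        ¬ Nat.Prime (Nat.choose k r * 2 ^ n + 1)}.Infinite) with hF
  set B3 := (Finset.Icc 1 x).filter (fun r => ∀ j : ℕ, r / 3 ^ j % 3 ≠ 1) with hB3
  set B5 := (Finset.Icc 1 x).filter (fun r => ∀ j : ℕ, r / 5 ^ j % 5 ≠ 1) with hB5
  set B7 := (Finset.Icc 1 x).filter (fun r => ∀ j : ℕ, r / 7 ^ j % 7 ≠ 1) with hB7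
  set B13 := (Finset.Icc 1 x).filter (fun r => ∀ j : ℕ, r / 13 ^ j % 13 ≠ 1) with hB13
  set B19 := (Finset.Icc 1 x).filter (fun r => ∀ j : ℕ, r / 19 ^ j % 19 ≠ 1) with hB19
  set B37 := (Finset.Icc 1 x).filter (fun r => ∀ j : ℕ, r / 37 ^ j % 37 ≠ 1) with hB37
  set B73 := (Finset.Icc 1 x).filter (fun r => ∀ j : ℕ, r / 73 ^ j % 73 ≠ 1) with hB73
  have hcover : Finset.Icc 1 x ⊆
      F ∪ (B3 ∪ (B5 ∪ (B7 ∪ (B13 ∪ (B19 ∪ (B37 ∪ B73)))))) := by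
    intro r hr
    simp only [Finset.mem_union, hF, hB3, hB5, hB7, hB13, hB19, hB37, hB73, Finset.mem_filter]
    by_cases H3 : ∀ j : ℕ, r / 3 ^ j % 3 ≠ 1
    · exact Or.inr (Or.inl ⟨hr, H3⟩)
    by_cases H5 : ∀ j : ℕ, r / 5 ^ j % 5 ≠ 1
    · exact Or.inr (Or.inr (Or.inl ⟨hr, H5⟩))
    by_cases H7 : ∀ j : ℕ, r / 7 ^ j % 7 ≠ 1
    · exact Or.inr (Or.inr (Or.inr (Or.inl ⟨hr, H7⟩)))
    by_cases H13 : ∀ j : ℕ, r / 13 ^ j % 13 ≠ 1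
    · exact Or.inr (Or.inr (Or.inr (Or.inr (Or.inl ⟨hr, H13⟩))))
    by_cases H19 : ∀ j : ℕ, r / 19 ^ j % 19 ≠ 1
    · exact Or.inr (Or.inr (Or.inr (Or.inr (Or.inr (Or.inl ⟨hr, H19⟩)))))
    by_cases H37 : ∀ j : ℕ, r / 37 ^ j % 37 ≠ 1
    · exact Or.inr (Or.inr (Or.inr (Or.inr (Or.inr (Or.inr (Or.inl ⟨hr, H37⟩))))))
    by_cases H73 : ∀ j : ℕ, r / 73 ^ j % 73 ≠ 1
    · exact Or.inr (Or.inr (Or.inr (Or.inr (Or.inr (Or.inr (Or.inr ⟨hr, H73⟩))))))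
    push_neg at H3 H5 H7 H13 H19 H37 H73
    have hr1 : 0 < r := (Finset.mem_Icc.mp hr).1
    exact Or.inl ⟨hr, goodInfinite r hr1 H3 H5 H7 H13 H19 H37 H73⟩
  have hx : x = (Finset.Icc 1 x).card := by rw [Nat.card_Icc]; omega
  rw [hx]
  apply le_trans (Finset.card_le_card hcover)
  calc (F ∪ (B3 ∪ (B5 ∪ (B7 ∪ (B13 ∪ (B19 ∪ (B37 ∪ B73))))))).card
      ≤ F.card + (B3 ∪ (B5 ∪ (B7 ∪ (B13 ∪ (B19 ∪ (B37 ∪ B73)))))).card := Finset.card_union_le _ _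
  _ ≤ F.card + (B3.card + (B5 ∪ (B7 ∪ (B13 ∪ (B19 ∪ (B37 ∪ B73))))).card) := by
      gcongr; exact Finset.card_union_le _ _
  _ ≤ F.card + (B3.card + (B5.card + (B7 ∪ (B13 ∪ (B19 ∪ (B37 ∪ B73)))).card)) := by
      gcongr; exact Finset.card_union_le _ _
  _ ≤ F.card + (B3.card + (B5.card + (B7.card + (B13 ∪ (B19 ∪ (B37 ∪ B73))).card))) := by
      gcongr; exact Finset.card_union_le _ _
  _ ≤ F.card + (B3.card + (B5.card + (B7.card + (B13.card + (B19 ∪ (B37 ∪ B73)).card)))) := by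
      gcongr; exact Finset.card_union_le _ _
  _ ≤ F.card + (B3.card + (B5.card + (B7.card + (B13.card + (B19.card + (B37 ∪ B73).card))))) := by
      gcongr; exact Finset.card_union_le _ _
  _ ≤ F.card + (B3.card + (B5.card + (B7.card + (B13.card + (B19.card + (B37.card + B73.card)))))) := by
      gcongr; exact Finset.card_union_le _ _
  _ = F.card + (B3.card + B5.card + B7.card + B13.card + B19.card + B37.card + B73.card) := by ring

lemma upperBound (x : ℕ) : sierpCount x ≤ x := by
  classical
  rw [sierpCount]
  apply le_trans (Finset.card_filter_le _ _)
  rw [Nat.card_Icc]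
  omega

lemma realGlue {S x b3 b5 b7 b13 b19 b37 b73 : ℝ} (hx : 0 < x)
    (h : x ≤ S + (b3 + b5 + b7 + b13 + b19 + b37 + b73)) :
    1 - b3/x - b5/x - b7/x - b13/x - b19/x - b37/x - b73/x ≤ S/x := by
  have hx0 : x ≠ 0 := ne_of_gt hx
  have heq : 1 - b3/x - b5/x - b7/x - b13/x - b19/x - b37/x - b73/x
      = (x - b3 - b5 - b7 - b13 - b19 - b37 - b73)/x := by field_simp
  rw [heq, div_le_div_iff₀ hx hx]
  nlinarith

theorem stmt_13 :
    Filter.Tendsto (fun x : ℕ => (sierpCount x : ℝ) / x) Filter.atTop (nhds 1) := by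
  classical
  have hlow : Filter.Tendsto (fun x : ℕ => (1:ℝ)
      - (((Finset.Icc 1 x).filter (fun r => ∀ j : ℕ, r / 3 ^ j % 3 ≠ 1)).card : ℝ) / x
      - (((Finset.Icc 1 x).filter (fun r => ∀ j : ℕ, r / 5 ^ j % 5 ≠ 1)).card : ℝ) / x
      - (((Finset.Icc 1 x).filter (fun r => ∀ j : ℕ, r / 7 ^ j % 7 ≠ 1)).card : ℝ) / x
      - (((Finset.Icc 1 x).filter (fun r => ∀ j : ℕ, r / 13 ^ j % 13 ≠ 1)).card : ℝ) / x
      - (((Finset.Icc 1 x).filter (fun r => ∀ j : ℕ, r / 19 ^ j % 19 ≠ 1)).card : ℝ) / x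
      - (((Finset.Icc 1 x).filter (fun r => ∀ j : ℕ, r / 37 ^ j % 37 ≠ 1)).card : ℝ) / x
      - (((Finset.Icc 1 x).filter (fun r => ∀ j : ℕ, r / 73 ^ j % 73 ≠ 1)).card : ℝ) / x
      ) Filter.atTop (nhds 1) := by
    have hstep0 : Filter.Tendsto (fun x : ℕ => (1:ℝ) - (((Finset.Icc 1 x).filter (fun r => ∀ j : ℕ, r / 3 ^ j % 3 ≠ 1)).card : ℝ) / x) Filter.atTop (nhds ((1:ℝ) - 0)) :=
      Filter.Tendsto.sub tendsto_const_nhds (badTend 3 (by norm_num))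
    have hstep1 : Filter.Tendsto (fun x : ℕ => (1:ℝ) - (((Finset.Icc 1 x).filter (fun r => ∀ j : ℕ, r / 3 ^ j % 3 ≠ 1)).card : ℝ) / x - (((Finset.Icc 1 x).filter (fun r => ∀ j : ℕ, r / 5 ^ j % 5 ≠ 1)).card : ℝ) / x) Filter.atTop (nhds ((1:ℝ) - 0 - 0)) :=
      Filter.Tendsto.sub hstep0 (badTend 5 (by norm_num))
    have hstep2 : Filter.Tendsto (fun x : ℕ => (1:ℝ) - (((Finset.Icc 1 x).filter (fun r => ∀ j : ℕ, r / 3 ^ j % 3 ≠ 1)).card : ℝ) / x - (((Finset.Icc 1 x).filter (fun r => ∀ j : ℕ, r / 5 ^ j % 5 ≠ 1)).card : ℝ) / x - (((Finset.Icc 1 x).filter (fun r => ∀ j : ℕ, r / 7 ^ j % 7 ≠ 1)).card : ℝ) / x) Filter.atTop (nhds ((1:ℝ) - 0 - 0 - 0)) :=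
      Filter.Tendsto.sub hstep1 (badTend 7 (by norm_num))
    have hstep3 : Filter.Tendsto (fun x : ℕ => (1:ℝ) - (((Finset.Icc 1 x).filter (fun r => ∀ j : ℕ, r / 3 ^ j % 3 ≠ 1)).card : ℝ) / x - (((Finset.Icc 1 x).filter (fun r => ∀ j : ℕ, r / 5 ^ j % 5 ≠ 1)).card : ℝ) / x - (((Finset.Icc 1 x).filter (fun r => ∀ j : ℕ, r / 7 ^ j % 7 ≠ 1)).card : ℝ) / x - (((Finset.Icc 1 x).filter (fun r => ∀ j : ℕ, r / 13 ^ j % 13 ≠ 1)).card : ℝ) / x) Filter.atTop (nhds ((1:ℝ) - 0 - 0 - 0 - 0)) :=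
      Filter.Tendsto.sub hstep2 (badTend 13 (by norm_num))
    have hstep4 : Filter.Tendsto (fun x : ℕ => (1:ℝ) - (((Finset.Icc 1 x).filter (fun r => ∀ j : ℕ, r / 3 ^ j % 3 ≠ 1)).card : ℝ) / x - (((Finset.Icc 1 x).filter (fun r => ∀ j : ℕ, r / 5 ^ j % 5 ≠ 1)).card : ℝ) / x - (((Finset.Icc 1 x).filter (fun r => ∀ j : ℕ, r / 7 ^ j % 7 ≠ 1)).card : ℝ) / x - (((Finset.Icc 1 x).filter (fun r => ∀ j : ℕ, r / 13 ^ j % 13 ≠ 1)).card : ℝ) / x - (((Finset.Icc 1 x).filter (fun r => ∀ j : ℕ, r / 19 ^ j % 19 ≠ 1)).card : ℝ) / x) Filter.atTop (nhds ((1:ℝ) - 0 - 0 - 0 - 0 - 0)) :=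
      Filter.Tendsto.sub hstep3 (badTend 19 (by norm_num))
    have hstep5 : Filter.Tendsto (fun x : ℕ => (1:ℝ) - (((Finset.Icc 1 x).filter (fun r => ∀ j : ℕ, r / 3 ^ j % 3 ≠ 1)).card : ℝ) / x - (((Finset.Icc 1 x).filter (fun r => ∀ j : ℕ, r / 5 ^ j % 5 ≠ 1)).card : ℝ) / x - (((Finset.Icc 1 x).filter (fun r => ∀ j : ℕ, r / 7 ^ j % 7 ≠ 1)).card : ℝ) / x - (((Finset.Icc 1 x).filter (fun r => ∀ j : ℕ, r / 13 ^ j % 13 ≠ 1)).card : ℝ) / x - (((Finset.Icc 1 x).filter (fun r => ∀ j : ℕ, r / 19 ^ j % 19 ≠ 1)).card : ℝ) / x - (((Finset.Icc 1 x).filter (fun r => ∀ j : ℕ, r / 37 ^ j % 37 ≠ 1)).card : ℝ) / x) Filter.atTop (nhds ((1:ℝ) - 0 - 0 - 0 - 0 - 0 - 0)) :=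
      Filter.Tendsto.sub hstep4 (badTend 37 (by norm_num))
    have hstep6 : Filter.Tendsto (fun x : ℕ => (1:ℝ) - (((Finset.Icc 1 x).filter (fun r => ∀ j : ℕ, r / 3 ^ j % 3 ≠ 1)).card : ℝ) / x - (((Finset.Icc 1 x).filter (fun r => ∀ j : ℕ, r / 5 ^ j % 5 ≠ 1)).card : ℝ) / x - (((Finset.Icc 1 x).filter (fun r => ∀ j : ℕ, r / 7 ^ j % 7 ≠ 1)).card : ℝ) / x - (((Finset.Icc 1 x).filter (fun r => ∀ j : ℕ, r / 13 ^ j % 13 ≠ 1)).card : ℝ) / x - (((Finset.Icc 1 x).filter (fun r => ∀ j : ℕ, r / 19 ^ j % 19 ≠ 1)).card : ℝ) / x - (((Finset.Icc 1 x).filter (fun r => ∀ j : ℕ, r / 37 ^ j % 37 ≠ 1)).card : ℝ) / x - (((Finset.Icc 1 x).filter (fun r => ∀ j : ℕ, r / 73 ^ j % 73 ≠ 1)).card : ℝ) / x) Filter.atTop (nhds ((1:ℝ) - 0 - 0 - 0 - 0 - 0 - 0 - 0)) :=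
      Filter.Tendsto.sub hstep5 (badTend 73 (by norm_num))
    simpa using hstep6
  apply tendsto_of_tendsto_of_tendsto_of_le_of_le' hlow tendsto_const_nhds
  · filter_upwards [Filter.eventually_ge_atTop 1] with x hx
    have hxpos : (0:ℝ) < x := by exact_mod_cast hx
    have hnat := lowerBound x
    have hcast : ((x:ℕ):ℝ) ≤ (sierpCount x : ℝ) +
        (((((Finset.Icc 1 x).filter (fun r => ∀ j : ℕ, r / 3 ^ j % 3 ≠ 1)).card : ℕ) : ℝ) +
        ((((Finset.Icc 1 x).filter (fun r => ∀ j : ℕ, r / 5 ^ j % 5 ≠ 1)).card : ℕ) : ℝ) +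
        ((((Finset.Icc 1 x).filter (fun r => ∀ j : ℕ, r / 7 ^ j % 7 ≠ 1)).card : ℕ) : ℝ) +
        ((((Finset.Icc 1 x).filter (fun r => ∀ j : ℕ, r / 13 ^ j % 13 ≠ 1)).card : ℕ) : ℝ) +
        ((((Finset.Icc 1 x).filter (fun r => ∀ j : ℕ, r / 19 ^ j % 19 ≠ 1)).card : ℕ) : ℝ) +
        ((((Finset.Icc 1 x).filter (fun r => ∀ j : ℕ, r / 37 ^ j % 37 ≠ 1)).card : ℕ) : ℝ) +
        ((((Finset.Icc 1 x).filter (fun r => ∀ j : ℕ, r / 73 ^ j % 73 ≠ 1)).card : ℕ) : ℝ)) := by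
      push_cast
      exact_mod_cast hnat
    exact realGlue hxpos (by linarith)
  · filter_upwards [Filter.eventually_ge_atTop 1] with x hx
    have hxpos : (0:ℝ) < x := by exact_mod_cast hx
    rw [div_le_one hxpos]
    exact_mod_cast upperBound x
end

section
/- Let a and r be positive integers such that a + 1 is not a power of 2 and r is odd. Assume there exists a positive integer τ such that a^{2^τ} − 1 is divisible by two distinct primes p₀ and p_τ, neither of which divides a^{2^m} − 1 for any m ∈ [0, τ−1]. Then there exist infinitely many positive integers k such that C(k, r) is an a-Sierpiński number: gcd(C(k,r) + 1, a − 1) = 1, C(k, r) is not a power of a, and C(k, r) · a^n + 1 is composite for all positive integers n. -/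
/-!
Write `n = 2 ^ m * w` with `w` odd. If an odd prime `q` divides `a ^ 2 ^ m + 1`, then
`a ^ n ≡ -1 (mod q)`, so `q ∣ C * a ^ n + 1` whenever `C ≡ 1 (mod q)`. Since `a` has order
`2 ^ τ` modulo `p_τ`, also `p_τ ∣ C * a ^ n + 1` for `m ≥ τ` whenever `C ≡ -1 (mod p_τ)`.
Choosing such primes `q_m` for `m < τ`, with `q_{τ-1} = p₀ ≠ p_τ`, gives a covering system.

It remains to make `C = C(k, r)` take the residues `1` mod every `q_m`, `-1` mod `p_τ` and `0`
mod every prime factor of `a - 1` (the last makes `C + 1` coprime to `a - 1`). As `r! * C(k, r)`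
is a polynomial in `k`, `k ≡ y (mod p ^ (v_p(r!) + 1))` forces `C(k, r) ≡ C(y, r) (mod p)`, and
`y = r`, `y = -1` (as `r` is odd) and `y = r - 1` give these residues; the Chinese remainder
theorem then supplies infinitely many `k`. Finally `C = a ^ e` is impossible: `a ^ e ≡ 1 (mod p₀)`
forces `2 ^ τ ∣ e`, hence `a ^ e ≡ 1 ≢ C (mod p_τ)`.
-/

open Nat Finset

section TwoPowerOrder

variable {M : Type*} [Monoid M] [HasDistribNeg M] {x : M} {m m' n : ℕ}

theorem orderOf_eq_two_pow_succ (h1 : (-1 : M) ≠ 1) (hx : x ^ 2 ^ m = -1) :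
    orderOf x = 2 ^ (m + 1) :=
  haveI : Fact (2).Prime := ⟨Nat.prime_two⟩
  orderOf_eq_prime_pow (by rwa [hx]) (by rw [pow_succ, pow_mul, hx, neg_one_sq])

theorem pow_eq_one_iff_two_pow_succ_dvd (h1 : (-1 : M) ≠ 1) (hx : x ^ 2 ^ m = -1) :
    x ^ n = 1 ↔ 2 ^ (m + 1) ∣ n := by
  rw [← orderOf_dvd_iff_pow_eq_one, orderOf_eq_two_pow_succ h1 hx]

theorem eq_of_pow_two_pow_eq_neg_one (h1 : (-1 : M) ≠ 1) (hx : x ^ 2 ^ m = -1)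
    (hx' : x ^ 2 ^ m' = -1) : m = m' := by
  have := (orderOf_eq_two_pow_succ h1 hx).symm.trans (orderOf_eq_two_pow_succ h1 hx')
  exact Nat.succ_injective (Nat.pow_right_injective le_rfl this)

theorem ne_one_of_pow_two_pow_eq_neg_one (h1 : (-1 : M) ≠ 1) (hx : x ^ 2 ^ m = -1) : x ≠ 1 := by
  rintro rfl
  exact h1 (by rw [← hx, one_pow])

end TwoPowerOrder

section FermatDivisors

theorem dvd_pow_sub_one_iff {p a n : ℕ} (ha : 0 < a) :
    p ∣ a ^ n - 1 ↔ (a : ZMod p) ^ n = 1 := by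
  rw [← Nat.modEq_iff_dvd' (Nat.one_le_pow _ _ ha), ← ZMod.natCast_eq_natCast_iff, eq_comm]
  push_cast
  rfl

theorem pow_two_pow_eq_neg_one_of_dvd {p a t : ℕ} (hp : p.Prime) (ha : 0 < a)
    (hd : p ∣ a ^ 2 ^ (t + 1) - 1) (hnd : ¬ p ∣ a ^ 2 ^ t - 1) :
    (-1 : ZMod p) ≠ 1 ∧ (a : ZMod p) ^ 2 ^ t = -1 := by
  have := Fact.mk hp
  rw [dvd_pow_sub_one_iff ha] at hd hnd
  rw [pow_succ, pow_mul] at hd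
  have hneg := (sq_eq_one_iff.mp hd).resolve_left hnd
  exact ⟨hneg ▸ hnd, hneg⟩

theorem sq_add_one_ne_two_pow {x : ℕ} (hx : 2 ≤ x) (s : ℕ) : x ^ 2 + 1 ≠ 2 ^ s := by
  intro h
  have hs : 2 ≤ s := by
    by_contra! hs
    interval_cases s <;> nlinarith
  have h4 : ((x ^ 2 + 1 : ℕ) : ZMod 4) = 0 :=
    (ZMod.natCast_eq_zero_iff _ _).mpr (h ▸ pow_dvd_pow 2 hs)
  push_cast at h4
  exact (by decide : ∀ y : ZMod 4, y ^ 2 + 1 ≠ 0) _ h4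

theorem two_le_of_not_add_one_eq_two_pow {a : ℕ} (ha : ¬ ∃ s, a + 1 = 2 ^ s) : 2 ≤ a := by
  by_contra! h
  interval_cases a
  exacts [ha ⟨0, rfl⟩, ha ⟨1, rfl⟩]

theorem pow_two_pow_add_one_ne_two_pow {a : ℕ} (ha : ¬ ∃ s, a + 1 = 2 ^ s) (m : ℕ) :
    ¬ ∃ s, a ^ 2 ^ m + 1 = 2 ^ s := by
  cases m with
  | zero => simpa using ha
  | succ m =>
    rintro ⟨s, hs⟩
    have hx : 2 ≤ a ^ 2 ^ m :=
      (two_le_of_not_add_one_eq_two_pow ha).trans (Nat.le_self_pow (by positivity) a)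
    exact sq_add_one_ne_two_pow hx s (by rwa [← pow_mul, ← pow_succ])

theorem exists_prime_pow_two_pow_eq_neg_one {a : ℕ} (ha : ¬ ∃ s, a + 1 = 2 ^ s) (m : ℕ) :
    ∃ q, q.Prime ∧ (-1 : ZMod q) ≠ 1 ∧ (a : ZMod q) ^ 2 ^ m = -1 := by
  obtain ⟨q, hq, hdvd, hodd⟩ := (Nat.eq_two_pow_or_exists_odd_prime_and_dvd _).resolve_left
    (pow_two_pow_add_one_ne_two_pow ha m)
  have : Fact (2 < q) :=
    ⟨hq.two_le.lt_of_ne (by rintro rfl; exact Nat.not_odd_iff_even.mpr even_two hodd)⟩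
  refine ⟨q, hq, ZMod.neg_one_ne_one, eq_neg_of_add_eq_zero_left ?_⟩
  exact_mod_cast (ZMod.natCast_eq_zero_iff _ _).mpr hdvd

end FermatDivisors

section BinomialCongruences

theorem descPochhammer_eval_neg_one (R : Type*) [Ring R] (r : ℕ) :
    (descPochhammer R r).eval (-1) = (-1) ^ r * r ! := by
  rw [descPochhammer_eval_eq_ascPochhammer, show (-1 : R) - r + 1 = -r by abel,
    ascPochhammer_eval_neg_eq_descPochhammer, descPochhammer_eval_eq_descFactorial,
    Nat.descFactorial_self]

theorem natCast_choose_eq_of_modEq {p r L k : ℕ} (hp : p.Prime)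
    (hL : (r !).factorization p < L) {y c : ℤ} (hy : (descPochhammer ℤ r).eval y = r ! * c)
    (hk : (k : ℤ) ≡ y [ZMOD p ^ L]) : (k.choose r : ZMod p) = c := by
  set v := (r !).factorization p
  have hdvd : (p : ℤ) ^ L ∣ r ! * ((k.choose r : ℤ) - c) := by
    have := hk.symm.dvd.trans (Polynomial.sub_dvd_eval_sub (k : ℤ) y (descPochhammer ℤ r))
    rwa [descPochhammer_eval_eq_descFactorial, hy, Nat.descFactorial_eq_factorial_mul_choose,
      Nat.cast_mul, ← mul_sub] at this
  rw [← (Nat.ordProj_mul_ordCompl_eq_self (r !) p), Nat.cast_mul, mul_assoc] at hdvd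
  have hpu : (p : ℤ) ∣ ((r ! / p ^ v : ℕ) : ℤ) * ((k.choose r : ℤ) - c) := by
    refine (mul_dvd_mul_iff_left (pow_ne_zero v (Int.natCast_ne_zero.mpr hp.ne_zero))).mp ?_
    rw [← pow_succ]
    exact (pow_dvd_pow _ hL).trans (by exact_mod_cast hdvd)
  have hX := ((Nat.prime_iff_prime_int.mp hp).dvd_or_dvd hpu).resolve_left
    (by exact_mod_cast Nat.not_dvd_ordCompl hp (factorial_ne_zero r))
  rw [← sub_eq_zero]
  exact_mod_cast (ZMod.intCast_zmod_eq_zero_iff_dvd _ p).mpr hX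

theorem succ_le_choose_add (s : ℕ) {r : ℕ} (hr : r ≠ 0) : s + 1 ≤ (s + r).choose r := by
  rw [← Nat.choose_symm_add, ← Nat.choose_succ_self_right s]
  exact Nat.choose_le_choose s (by omega)

theorem finite_setOf_choose_le {r : ℕ} (hr : r ≠ 0) (N : ℕ) :
    {k : ℕ | k.choose r ≤ N}.Finite := by
  refine (Set.finite_lt_nat (N + r)).subset fun k (hk : k.choose r ≤ N) => ?_
  by_contra! h
  have := succ_le_choose_add (k - r) hr
  rw [Set.mem_ofPred_eq, not_lt] at h
  rw [Nat.sub_add_cancel (by omega)] at this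
  omega

end BinomialCongruences

theorem infinite_setOf_forall_modEq {ι : Type*} (S : Finset ι) (s x : ι → ℕ)
    (hs : ∀ i ∈ S, s i ≠ 0) (hco : Set.Pairwise S fun i j => Nat.Coprime (s i) (s j)) :
    {k | ∀ i ∈ S, k ≡ x i [MOD s i]}.Infinite := by
  obtain ⟨k₀, hk₀⟩ := Nat.chineseRemainderOfFinset x s S hs hco
  have hM : ∏ i ∈ S, s i ≠ 0 := Finset.prod_ne_zero_iff.mpr hs
  refine Set.infinite_of_injective_forall_mem (f := fun n => k₀ + (∏ i ∈ S, s i) * n)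
    (fun n n' h => by simpa [hM] using h) fun n i hi => ?_
  obtain ⟨c, hc⟩ := Finset.dvd_prod_of_mem s hi
  simp only [hc, mul_assoc]
  exact Nat.add_modulus_mul_modEq_iff.mpr (hk₀ i hi)

theorem infinite_setOf_choose_residues {r : ℕ} (hr : Odd r) {Q F : Finset ℕ} {p : ℕ}
    (hQ : ∀ q ∈ Q, q.Prime) (hF : ∀ ℓ ∈ F, ℓ.Prime) (hp : p.Prime)
    (hpQ : p ∉ Q) (hpF : p ∉ F) (hQF : Disjoint Q F) :
    {k : ℕ | (∀ q ∈ Q, (k.choose r : ZMod q) = 1) ∧ (k.choose r : ZMod p) = -1 ∧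
      ∀ ℓ ∈ F, ℓ ∣ k.choose r}.Infinite := by
  set S := insert p (Q ∪ F)
  have hS : ∀ q ∈ S, q.Prime := by
    simp only [S, mem_insert, mem_union]
    rintro q (rfl | hq | hq)
    exacts [hp, hQ q hq, hF q hq]
  let x : ℕ → ℕ := fun q => if q ∈ Q then r else if q = p then p ^ (r !) - 1 else r - 1
  refine (infinite_setOf_forall_modEq S (· ^ r !) x (fun q hq => pow_ne_zero _ (hS q hq).ne_zero)
    fun q hq q' hq' hne => Nat.coprime_pow_primes _ _ (hS q hq) (hS q' hq') hne).mono
    fun k hk => ?_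
  have key : ∀ q ∈ S, ∀ y c : ℤ, (descPochhammer ℤ r).eval y = r ! * c →
      (k : ℤ) ≡ y [ZMOD q ^ r !] → (k.choose r : ZMod q) = c := fun q hq _ _ =>
    natCast_choose_eq_of_modEq (hS q hq) (Nat.factorization_lt _ (factorial_ne_zero r))
  have hk' : ∀ q ∈ S, (k : ℤ) ≡ x q [ZMOD q ^ r !] := fun q hq => by
    exact_mod_cast Int.natCast_modEq_iff.mpr (hk q hq)
  refine ⟨fun q hq => ?_, ?_, fun ℓ hℓ => ?_⟩
  · have hkq := hk' q (mem_insert_of_mem (mem_union_left _ hq))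
    simp only [x, if_pos hq] at hkq
    exact_mod_cast key q (mem_insert_of_mem (mem_union_left _ hq)) r 1
      (by rw [descPochhammer_eval_eq_descFactorial, Nat.descFactorial_self, mul_one]) hkq
  · have hkp := hk' p (mem_insert_self _ _)
    simp only [x, if_neg hpQ, if_true] at hkp
    have hkp' : (k : ℤ) ≡ -1 [ZMOD p ^ r !] := hkp.trans <| by
      rw [Nat.cast_sub (Nat.one_le_pow _ _ hp.pos)]
      exact (Int.modEq_iff_dvd.mpr ⟨-1, by push_cast; ring⟩)
    have := key p (mem_insert_self _ _) (-1) (-1)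
      (by rw [descPochhammer_eval_neg_one, hr.neg_one_pow]; ring) hkp'
    exact_mod_cast this
  · have hℓS : ℓ ∈ S := mem_insert_of_mem (mem_union_right _ hℓ)
    have hkℓ := hk' ℓ hℓS
    simp only [x, if_neg (Finset.disjoint_right.mp hQF hℓ),
      if_neg (show ℓ ≠ p by rintro rfl; exact hpF hℓ)] at hkℓ
    have := key ℓ hℓS _ 0 (by
      rw [descPochhammer_eval_eq_descFactorial, mul_zero, Nat.cast_eq_zero,
        Nat.descFactorial_eq_zero_iff_lt]
      exact Nat.sub_lt hr.pos one_pos) hkℓ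
    exact (ZMod.natCast_eq_zero_iff _ _).mp (by exact_mod_cast this)

section Sierpinski

theorem coprime_add_one_of_forall_prime_dvd {b C : ℕ} (h : ∀ ℓ, ℓ.Prime → ℓ ∣ b → ℓ ∣ C) :
    Nat.Coprime (C + 1) b :=
  Nat.coprime_of_dvd fun ℓ hℓ h1 h2 =>
    hℓ.one_lt.ne' (Nat.dvd_one.mp ((Nat.dvd_add_right (h ℓ hℓ h2)).mp h1))

theorem ne_pow_of_residues {a C t p q : ℕ} (hp : (-1 : ZMod p) ≠ 1) (hq : (-1 : ZMod q) ≠ 1)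
    (hpa : (a : ZMod p) ^ 2 ^ t = -1) (hqa : (a : ZMod q) ^ 2 ^ t = -1)
    (hpC : (C : ZMod p) = -1) (hqC : (C : ZMod q) = 1) (e : ℕ) : C ≠ a ^ e := by
  rintro rfl
  push_cast at hpC hqC
  have he := (pow_eq_one_iff_two_pow_succ_dvd hq hqa).mp hqC
  exact hp (hpC.symm.trans ((pow_eq_one_iff_two_pow_succ_dvd hp hpa).mpr he))

theorem not_prime_mul_pow_add_one {a C t p : ℕ} {q : ℕ → ℕ} (ha : 0 < a)
    (hq : ∀ m ≤ t, (q m).Prime) (hqa : ∀ m ≤ t, (a : ZMod (q m)) ^ 2 ^ m = -1)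
    (hqC : ∀ m ≤ t, (C : ZMod (q m)) = 1) (hqlt : ∀ m ≤ t, q m < C)
    (hp : p.Prime) (hpa : (a : ZMod p) ^ 2 ^ (t + 1) = 1) (hpC : (C : ZMod p) = -1)
    (hplt : p < C) {n : ℕ} (hn : n ≠ 0) : ¬ (C * a ^ n + 1).Prime := by
  obtain ⟨m, w, hw, rfl⟩ := Nat.exists_eq_two_pow_mul_odd hn
  have hlt : C < C * a ^ (2 ^ m * w) + 1 := by
    have := Nat.one_le_pow (2 ^ m * w) a ha
    nlinarith
  by_cases hm : m ≤ t
  · refine Nat.not_prime_of_dvd_of_lt ?_ (hq m hm).two_le ((hqlt m hm).trans hlt)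
    rw [← ZMod.natCast_eq_zero_iff]
    push_cast
    rw [hqC m hm, pow_mul, hqa m hm, hw.neg_one_pow]
    ring
  · refine Nat.not_prime_of_dvd_of_lt ?_ hp.two_le (hplt.trans hlt)
    rw [← ZMod.natCast_eq_zero_iff]
    push_cast
    obtain ⟨c, hc⟩ := (pow_dvd_pow 2 (by omega : t + 1 ≤ m)).mul_right w
    rw [hpC, hc, pow_mul, hpa, one_pow]
    ring

theorem infinite_setOf_choose_sierpinski {a r t p : ℕ} {q : ℕ → ℕ} (ha : 2 ≤ a) (hr : Odd r)
    (hq : ∀ m ≤ t, (q m).Prime) (hq1 : ∀ m ≤ t, (-1 : ZMod (q m)) ≠ 1)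
    (hqa : ∀ m ≤ t, (a : ZMod (q m)) ^ 2 ^ m = -1) (hqp : ∀ m ≤ t, q m ≠ p)
    (hp : p.Prime) (hp1 : (-1 : ZMod p) ≠ 1) (hpa : (a : ZMod p) ^ 2 ^ t = -1) :
    {k : ℕ | 0 < k ∧ Nat.gcd (k.choose r + 1) (a - 1) = 1 ∧ (¬ ∃ e, k.choose r = a ^ e) ∧
      ∀ n, 0 < n → 1 < k.choose r * a ^ n + 1 ∧ ¬ (k.choose r * a ^ n + 1).Prime}.Infinite := by
  set Q := (range (t + 1)).image q
  set F := (a - 1).primeFactors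
  have hqQ : ∀ m ≤ t, q m ∈ Q := fun m hm => mem_image_of_mem q (mem_range.mpr (by omega))
  have haF : ∀ ℓ ∈ F, (a : ZMod ℓ) = 1 := fun ℓ hℓ => by
    have h := Nat.dvd_of_mem_primeFactors hℓ
    rw [← pow_one a] at h
    simpa using (dvd_pow_sub_one_iff (by omega)).mp h
  have hK := infinite_setOf_choose_residues hr (Q := Q) (F := F)
    (by simpa [Q, Nat.lt_succ_iff] using hq) (fun ℓ hℓ => Nat.prime_of_mem_primeFactors hℓ) hp
    (by simpa [Q, Nat.lt_succ_iff] using hqp)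
    (fun h => ne_one_of_pow_two_pow_eq_neg_one hp1 hpa (haF p h))
    (Finset.disjoint_left.mpr <| by simpa [Q, Nat.lt_succ_iff] using fun m hm h =>
      ne_one_of_pow_two_pow_eq_neg_one (hq1 m hm) (hqa m hm) (haF _ h))
  refine ((hK.sdiff (finite_setOf_choose_le hr.pos.ne' ((insert p Q).sup id))).mono ?_)
  rintro k ⟨⟨hkQ, hkp, hkF⟩, hbig⟩
  simp only [Set.mem_ofPred_eq, not_le] at hbig
  have hlt : ∀ p' ∈ insert p Q, p' < k.choose r := fun p' hp' =>
    (Finset.le_sup (f := id) hp').trans_lt hbig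
  refine ⟨Nat.pos_of_ne_zero ?_, ?_, ?_, fun n hn => ⟨?_, ?_⟩⟩
  · rintro rfl
    simp [Nat.choose_eq_zero_of_lt hr.pos] at hbig
  · exact coprime_add_one_of_forall_prime_dvd fun ℓ hℓ hdvd =>
      hkF ℓ (Nat.mem_primeFactors.mpr ⟨hℓ, hdvd, by omega⟩)
  · rintro ⟨e, he⟩
    exact ne_pow_of_residues hp1 (hq1 t le_rfl) hpa (hqa t le_rfl) hkp (hkQ _ (hqQ t le_rfl)) e he
  · have := Nat.one_le_pow n a (by omega)
    have := hlt p (mem_insert_self _ _)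
    nlinarith
  · exact not_prime_mul_pow_add_one (by omega) hq hqa (fun m hm => hkQ _ (hqQ m hm))
      (fun m hm => hlt _ (mem_insert_of_mem (hqQ m hm))) hp
      (by rw [pow_succ, pow_mul, hpa, neg_one_sq]) hkp (hlt p (mem_insert_self _ _)) hn.ne'

end Sierpinski

theorem stmt_15_general (a r : ℕ) (hodd : Odd r)
    (ha2 : ¬ ∃ s : ℕ, a + 1 = 2 ^ s)
    (hτ : ∃ τ : ℕ, 0 < τ ∧ ∃ p₀ pτ : ℕ, p₀.Prime ∧ pτ.Prime ∧ p₀ ≠ pτ ∧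
      p₀ ∣ a ^ 2 ^ τ - 1 ∧ pτ ∣ a ^ 2 ^ τ - 1 ∧
      ∀ m : ℕ, m < τ → ¬ p₀ ∣ a ^ 2 ^ m - 1 ∧ ¬ pτ ∣ a ^ 2 ^ m - 1) :
    {k : ℕ | 0 < k ∧
      Nat.gcd (Nat.choose k r + 1) (a - 1) = 1 ∧
      (¬ ∃ e : ℕ, Nat.choose k r = a ^ e) ∧
      ∀ n : ℕ, 0 < n →
        1 < Nat.choose k r * a ^ n + 1 ∧
        ¬ Nat.Prime (Nat.choose k r * a ^ n + 1)}.Infinite := by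
  obtain ⟨τ, hτ0, p₀, pτ, hp₀, hpτ, hne, hp₀d, hpτd, hmin⟩ := hτ
  obtain ⟨t, rfl⟩ : ∃ t, τ = t + 1 := ⟨τ - 1, by omega⟩
  have ha : 2 ≤ a := two_le_of_not_add_one_eq_two_pow ha2
  obtain ⟨hp₀1, hp₀a⟩ :=
    pow_two_pow_eq_neg_one_of_dvd hp₀ (by omega) hp₀d (hmin t t.lt_succ_self).1
  obtain ⟨hpτ1, hpτa⟩ :=
    pow_two_pow_eq_neg_one_of_dvd hpτ (by omega) hpτd (hmin t t.lt_succ_self).2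
  have hcover : ∀ m, ∃ q, q.Prime ∧ (-1 : ZMod q) ≠ 1 ∧ (a : ZMod q) ^ 2 ^ m = -1 ∧ q ≠ pτ := by
    intro m
    rcases eq_or_ne m t with rfl | hmt
    · exact ⟨p₀, hp₀, hp₀1, hp₀a, hne⟩
    · obtain ⟨q, hq, hq1, hqa⟩ := exists_prime_pow_two_pow_eq_neg_one ha2 m
      exact ⟨q, hq, hq1, hqa, fun h => hmt (eq_of_pow_two_pow_eq_neg_one hpτ1 (h ▸ hqa) hpτa)⟩
  choose q hq hq1 hqa hqpτ using hcover
  exact infinite_setOf_choose_sierpinski ha hodd (fun m _ => hq m) (fun m _ => hq1 m)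
    (fun m _ => hqa m) (fun m _ => hqpτ m) hpτ hpτ1 hpτa

theorem stmt_15 (a r : ℕ) (ha : 0 < a) (hr : 0 < r) (hodd : Odd r)
    (ha2 : ¬ ∃ s : ℕ, a + 1 = 2 ^ s)
    (hτ : ∃ τ : ℕ, 0 < τ ∧ ∃ p₀ pτ : ℕ, p₀.Prime ∧ pτ.Prime ∧ p₀ ≠ pτ ∧
      p₀ ∣ a ^ 2 ^ τ - 1 ∧ pτ ∣ a ^ 2 ^ τ - 1 ∧
      ∀ m : ℕ, m < τ → ¬ p₀ ∣ a ^ 2 ^ m - 1 ∧ ¬ pτ ∣ a ^ 2 ^ m - 1) :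
    {k : ℕ | 0 < k ∧
      Nat.gcd (Nat.choose k r + 1) (a - 1) = 1 ∧
      (¬ ∃ e : ℕ, Nat.choose k r = a ^ e) ∧
      ∀ n : ℕ, 0 < n →
        1 < Nat.choose k r * a ^ n + 1 ∧
        ¬ Nat.Prime (Nat.choose k r * a ^ n + 1)}.Infinite :=
  stmt_15_general a r hodd ha2 hτ
end

section
/- Let a and r be positive integers such that a + 1 is not a power of 2 and r is odd. Assume there exists a positive integer τ such that a^{2^τ} − 1 is divisible by two distinct primes p₀ and p_τ, neither of which divides a^{2^m} − 1 for any m ∈ [0, τ−1]. Then there exist infinitely many positive integers k such that C(k, r) is an a-Riesel number: gcd(C(k,r) − 1, a − 1) = 1, C(k, r) is not a power of a, and C(k, r) · a^n − 1 is composite for all positive integers n. -/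
/-!
Choose `k` by the Chinese remainder theorem modulo `q ^ r !` for every prime
`q ∣ 2 * (a ^ 2 ^ τ - 1)`: `k ≡ r` at `p₀`, `k ≡ 0` at `2` when `a` is odd, and `k ≡ -1`
elsewhere. As `r !` exceeds the `q`-adic valuation of `r !`, the binomial coefficient
`s = C(k, r)` then satisfies `s ≡ 1 (mod p₀)`, `s ≡ -1` modulo every other odd prime factor of
`a ^ 2 ^ τ - 1`, and `s + a` is odd.

Write `n = 2 ^ j * u` with `u` odd. If `j ≥ τ`, then `p₀ ∣ s * a ^ n - 1`. If `j < τ`, then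
`s * a ^ n - 1` is divisible by any odd prime `q ≠ p₀` dividing `a ^ 2 ^ j + 1`: for `j = τ - 1`
take `pτ`, for smaller `j` such a `q` exists because neither `a + 1` nor `b ^ 2 + 1` (`b ≥ 2`) is
a power of `2`. In both cases the prime divides `s ∓ 1`, so it is smaller than `s * a ^ n - 1`.
Parity rules out `s = a ^ e` and the factor `2` of `gcd (s - 1) (a - 1)`; an odd prime factor
would divide both `s - 1` and `s + 1`.
-/
open Function Nat Polynomial

def IsRieselNumber (a s : ℕ) : Prop :=
  Nat.gcd (s - 1) (a - 1) = 1 ∧ (¬ ∃ e : ℕ, s = a ^ e) ∧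
    ∀ n : ℕ, 0 < n → 1 < s * a ^ n - 1 ∧ ¬ (s * a ^ n - 1).Prime

theorem descPochhammer_eval_neg_one_of_odd {r : ℕ} (hr : Odd r) :
    (descPochhammer ℤ r).eval (-1) = -(r ! : ℤ) := by
  have h := ascPochhammer_eval_neg_eq_descPochhammer ℤ (-1) r
  rw [neg_neg, ascPochhammer_eval_one, hr.neg_one_pow] at h
  linarith

/-- Since `r !` exceeds the `q`-adic valuation `v` of `r !`, the divisibility
`q ^ (v + 1) ∣ r ! * (k.choose r - c)` leaves one factor `q` for `k.choose r - c`. -/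
theorem choose_modEq_of_descPochhammer_eval_eq {q r k : ℕ} {x c : ℤ} (hq : q.Prime)
    (hk : (k : ℤ) ≡ x [ZMOD q ^ r !]) (hx : (descPochhammer ℤ r).eval x = r ! * c) :
    (k.choose r : ℤ) ≡ c [ZMOD q] := by
  set v := (r !).factorization q
  set u := r ! / q ^ v
  have hr : (r ! : ℤ) = q ^ v * u := by
    exact_mod_cast (Nat.ordProj_mul_ordCompl_eq_self _ _).symm
  have hqu : ¬ (q : ℤ) ∣ u := by exact_mod_cast Nat.not_dvd_ordCompl hq (factorial_ne_zero r)
  have hv : v + 1 ≤ r ! := Nat.factorization_lt q (factorial_ne_zero r)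
  have hkx : (q : ℤ) ^ (v + 1) ∣ k - x :=
    (pow_dvd_pow _ hv).trans (by simpa using hk.symm.dvd)
  have hdvd : (k : ℤ) - x ∣ q ^ v * (u * (k.choose r - c)) := by
    have h := sub_dvd_eval_sub (k : ℤ) x (descPochhammer ℤ r)
    rwa [descPochhammer_eval_eq_descFactorial, hx, descFactorial_eq_factorial_mul_choose,
      Nat.cast_mul, ← mul_sub, hr, mul_assoc] at h
  rw [pow_succ] at hkx
  have hq_dvd := (mul_dvd_mul_iff_left (pow_ne_zero v (by exact_mod_cast hq.ne_zero))).mp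
    (hkx.trans hdvd)
  have h := (Int.Prime.dvd_mul' hq hq_dvd).resolve_left hqu
  exact (Int.modEq_iff_dvd.mpr h).symm

theorem choose_modEq_neg_one_of_modEq {q r k : ℕ} (hq : q.Prime) (hr : Odd r)
    (hk : (k : ℤ) ≡ -1 [ZMOD q ^ r !]) : (k.choose r : ℤ) ≡ -1 [ZMOD q] :=
  choose_modEq_of_descPochhammer_eval_eq hq hk (by
    rw [descPochhammer_eval_neg_one_of_odd hr, mul_neg_one])

theorem choose_modEq_one_of_modEq {q r k : ℕ} (hq : q.Prime)
    (hk : (k : ℤ) ≡ r [ZMOD q ^ r !]) : (k.choose r : ℤ) ≡ 1 [ZMOD q] :=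
  choose_modEq_of_descPochhammer_eval_eq hq hk (by
    rw [descPochhammer_eval_eq_descFactorial, descFactorial_self, mul_one])

theorem choose_modEq_zero_of_modEq {q r k : ℕ} (hq : q.Prime) (hr : r ≠ 0)
    (hk : (k : ℤ) ≡ 0 [ZMOD q ^ r !]) : (k.choose r : ℤ) ≡ 0 [ZMOD q] :=
  choose_modEq_of_descPochhammer_eval_eq hq hk (by
    rw [descPochhammer_ne_zero_eval_zero ℤ hr, mul_zero])

theorem odd_choose_add {a r k : ℕ} (hr : Odd r)
    (hk : (k : ℤ) ≡ (if Odd a then 0 else -1) [ZMOD 2 ^ r !]) : Odd (k.choose r + a) := by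
  rw [Nat.odd_iff]
  by_cases ha : Odd a
  · have h := (choose_modEq_zero_of_modEq prime_two hr.pos.ne' (by simpa [ha] using hk)).dvd
    rw [Nat.odd_iff] at ha
    omega
  · have h := (choose_modEq_neg_one_of_modEq prime_two hr (by simpa [ha] using hk)).dvd
    rw [Nat.not_odd_iff] at ha
    omega

theorem infinite_setOf_forall_modEq_s16 {ι : Type*} (t : Finset ι) (m : ι → ℕ)
    (hm : ∀ i ∈ t, m i ≠ 0) (hcop : Set.Pairwise t (Coprime on m)) (x : ι → ℤ) :
    {k : ℕ | ∀ i ∈ t, (k : ℤ) ≡ x i [ZMOD m i]}.Infinite := by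
  obtain ⟨k₀, hk₀⟩ := Nat.chineseRemainderOfFinset (fun i => (x i % m i).toNat) m t hm hcop
  have hM : ∏ i ∈ t, m i ≠ 0 := Finset.prod_ne_zero_iff.mpr hm
  refine Set.infinite_of_injective_forall_mem (f := fun n : ℕ => k₀ + n * ∏ i ∈ t, m i)
    (fun n n' h => by simpa [hM] using h) (fun n i hi => ?_)
  obtain ⟨c, hc⟩ := Finset.dvd_prod_of_mem m hi
  have hres : ((x i % m i).toNat : ℤ) = x i % m i :=
    Int.toNat_of_nonneg (Int.emod_nonneg _ (by exact_mod_cast hm i hi))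
  calc ((k₀ + n * ∏ i ∈ t, m i : ℕ) : ℤ) ≡ k₀ [ZMOD m i] :=
        Int.modEq_iff_dvd.mpr ⟨-(n * c), by push_cast [hc]; ring⟩
    _ ≡ x i % m i [ZMOD m i] := by rw [← hres]; exact Int.natCast_modEq_iff.mpr (hk₀ i hi)
    _ ≡ x i [ZMOD m i] := Int.mod_modEq _ _

theorem infinite_setOf_forall_prime_dvd_modEq {n : ℕ} (hn : n ≠ 0) (N : ℕ) (x : ℕ → ℤ) :
    {k : ℕ | ∀ q : ℕ, q.Prime → q ∣ n → (k : ℤ) ≡ x q [ZMOD q ^ N]}.Infinite := by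
  refine (infinite_setOf_forall_modEq_s16 n.primeFactors (· ^ N)
    (fun q hq => pow_ne_zero _ (prime_of_mem_primeFactors hq).ne_zero)
    (fun q hq q' hq' hqq' => Nat.coprime_pow_primes _ _ (prime_of_mem_primeFactors hq)
      (prime_of_mem_primeFactors hq') hqq') x).mono fun _ hk q hq hqn => ?_
  exact hk q (Nat.mem_primeFactors.mpr ⟨hq, hqn, hn⟩)

theorem pow_two_pow_succ_sub_one (a j : ℕ) :
    a ^ 2 ^ (j + 1) - 1 = (a ^ 2 ^ j + 1) * (a ^ 2 ^ j - 1) := by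
  rw [pow_succ, pow_mul, ← Nat.sq_sub_sq, one_pow]

theorem pow_two_pow_add_one_dvd (a : ℕ) {j m : ℕ} (hjm : j < m) :
    a ^ 2 ^ j + 1 ∣ a ^ 2 ^ m - 1 :=
  (Dvd.intro _ (pow_two_pow_succ_sub_one a j).symm).trans
    (Nat.pow_sub_one_dvd_pow_sub_one a (pow_dvd_pow 2 hjm))

theorem Nat.Prime.dvd_pow_two_pow_add_one {p a j : ℕ} (hp : p.Prime)
    (h : p ∣ a ^ 2 ^ (j + 1) - 1) (h' : ¬ p ∣ a ^ 2 ^ j - 1) : p ∣ a ^ 2 ^ j + 1 := by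
  rw [pow_two_pow_succ_sub_one] at h
  exact (hp.dvd_mul.mp h).resolve_right h'

theorem ne_two_of_dvd_pow_sub_one {p a m : ℕ} (hm : m ≠ 0) (h : p ∣ a ^ m - 1)
    (h' : ¬ p ∣ a - 1) : p ≠ 2 := by
  rintro rfl
  rcases Nat.even_or_odd a with ha | ⟨c, rfl⟩
  · rcases Nat.eq_zero_or_pos a with rfl | ha0
    · simp at h'
    obtain ⟨c, hc⟩ := ha.pow_of_ne_zero hm
    have := Nat.one_le_pow m a ha0
    omega
  · simp at h'

theorem sq_add_one_ne_two_pow_s16 {b : ℕ} (hb : 2 ≤ b) (e : ℕ) : b ^ 2 + 1 ≠ 2 ^ e := by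
  intro h
  have he : 2 ≤ e := by
    by_contra! he
    interval_cases e <;> nlinarith
  have h4 : ((b ^ 2 + 1 : ℕ) : ZMod 4) = 0 :=
    (ZMod.natCast_eq_zero_iff _ _).mpr (h ▸ (pow_dvd_pow 2 he : 2 ^ 2 ∣ 2 ^ e))
  push_cast at h4
  generalize (b : ZMod 4) = x at h4
  revert x
  decide

theorem exists_prime_ne_two_dvd {n : ℕ} (hn : n ≠ 0) (h : ∀ e, n ≠ 2 ^ e) :
    ∃ q, q.Prime ∧ q ≠ 2 ∧ q ∣ n := by
  by_contra! hq
  exact h _ (Nat.eq_prime_pow_of_unique_prime_dvd hn fun hd hdn =>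
    by_contra fun h2 => hq _ hd h2 hdn)

theorem exists_prime_ne_two_dvd_pow_two_pow_add_one {a : ℕ} (ha : 2 ≤ a)
    (ha2 : ¬ ∃ e, a + 1 = 2 ^ e) (j : ℕ) : ∃ q, q.Prime ∧ q ≠ 2 ∧ q ∣ a ^ 2 ^ j + 1 := by
  refine exists_prime_ne_two_dvd (by positivity) fun e he => ?_
  rcases j with _ | j
  · exact ha2 ⟨e, by simpa using he⟩
  · rw [pow_succ, pow_mul] at he
    exact sq_add_one_ne_two_pow_s16 (le_trans ha (Nat.le_self_pow (by positivity) a)) e he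

theorem exists_covering_prime {a τ p₀ pτ j : ℕ} (ha : 2 ≤ a) (ha2 : ¬ ∃ e, a + 1 = 2 ^ e)
    (hpτ : pτ.Prime) (hne : p₀ ≠ pτ) (hpττ : pτ ∣ a ^ 2 ^ τ - 1)
    (hmin : ∀ m < τ, ¬ p₀ ∣ a ^ 2 ^ m - 1 ∧ ¬ pτ ∣ a ^ 2 ^ m - 1) (hj : j < τ) :
    ∃ q, q.Prime ∧ q ≠ 2 ∧ q ≠ p₀ ∧ q ∣ a ^ 2 ^ j + 1 ∧ q ∣ a ^ 2 ^ τ - 1 := by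
  rcases (show j + 1 = τ ∨ j + 1 < τ by omega) with rfl | hjτ
  · refine ⟨pτ, hpτ, ne_two_of_dvd_pow_sub_one (by positivity) hpττ ?_, hne.symm,
      hpτ.dvd_pow_two_pow_add_one hpττ (hmin j hj).2, hpττ⟩
    simpa using (hmin 0 j.succ_pos).2
  · obtain ⟨q, hq, hq2, hqa⟩ := exists_prime_ne_two_dvd_pow_two_pow_add_one ha ha2 j
    refine ⟨q, hq, hq2, ?_, hqa, hqa.trans (pow_two_pow_add_one_dvd a hj)⟩
    rintro rfl
    exact (hmin _ hjτ).1 (hqa.trans (pow_two_pow_add_one_dvd a j.lt_succ_self))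

theorem exists_prime_dvd_mul_pow_sub_one {a s : ℤ} {τ p₀ : ℕ} (hp₀ : p₀.Prime)
    (hp₀τ : (p₀ : ℤ) ∣ a ^ 2 ^ τ - 1) (hs₀ : s ≡ 1 [ZMOD p₀])
    (hcover : ∀ j < τ, ∃ q : ℕ, q.Prime ∧ (q : ℤ) ∣ a ^ 2 ^ j + 1 ∧ s ≡ -1 [ZMOD q])
    (n : ℕ) :
    ∃ q : ℕ, q.Prime ∧ (q : ℤ) ∣ s * a ^ n - 1 ∧ (s ≡ 1 [ZMOD q] ∨ s ≡ -1 [ZMOD q]) := by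
  by_cases hτn : 2 ^ τ ∣ n
  · obtain ⟨w, rfl⟩ := hτn
    have ha : a ^ 2 ^ τ ≡ 1 [ZMOD p₀] := (Int.modEq_iff_dvd.mpr hp₀τ).symm
    have h : s * a ^ (2 ^ τ * w) ≡ 1 [ZMOD p₀] := by simpa [pow_mul] using hs₀.mul (ha.pow w)
    exact ⟨p₀, hp₀, h.symm.dvd, Or.inl hs₀⟩
  · obtain ⟨j, u, hu, rfl⟩ := Nat.exists_eq_pow_mul_and_not_dvd
      (show n ≠ 0 by rintro rfl; simp at hτn) 2 (by norm_num)
    have hj : j < τ := by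
      by_contra! hτj
      exact hτn ((pow_dvd_pow 2 hτj).mul_right u)
    obtain ⟨q, hq, hqa, hs⟩ := hcover j hj
    have ha : a ^ 2 ^ j ≡ -1 [ZMOD q] := (Int.modEq_iff_dvd.mpr (by simpa using hqa)).symm
    have hu : Odd u := Nat.odd_iff.mpr (by omega)
    have h : s * a ^ (2 ^ j * u) ≡ 1 [ZMOD q] := by
      simpa [pow_mul, hu.neg_one_pow] using hs.mul (ha.pow u)
    exact ⟨q, hq, h.symm.dvd, Or.inr hs⟩

theorem not_prime_mul_sub_one {s m q : ℕ} (hs : 3 ≤ s) (hm : 2 ≤ m) (hq : q.Prime)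
    (hdvd : (q : ℤ) ∣ s * m - 1) (hqs : (s : ℤ) ≡ 1 [ZMOD q] ∨ (s : ℤ) ≡ -1 [ZMOD q]) :
    ¬ (s * m - 1).Prime := by
  have hsm : 2 * s ≤ s * m := by nlinarith
  have hq_le : (q : ℤ) ≤ s + 1 := by
    rcases hqs with h | h
    · have := Int.le_of_dvd (by omega) h.symm.dvd
      omega
    · have := Int.le_of_dvd (by omega) h.symm.dvd
      omega
  have hdvd : q ∣ s * m - 1 := by
    rw [← Int.natCast_dvd_natCast, Nat.cast_sub (by omega)]
    exact_mod_cast hdvd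
  intro hp
  rcases hp.eq_one_or_self_of_dvd q hdvd with h | h
  · exact hq.one_lt.ne' h
  · omega

theorem gcd_sub_one_sub_one_eq_one {a s : ℕ} (ha : 1 ≤ a) (hs : 1 ≤ s) (hpar : Odd (s + a))
    (hℓ : ∀ ℓ, ℓ.Prime → ℓ ≠ 2 → ℓ ∣ a - 1 → (s : ℤ) ≡ -1 [ZMOD ℓ]) :
    Nat.gcd (s - 1) (a - 1) = 1 := by
  refine Nat.coprime_of_dvd fun ℓ hℓp hℓs hℓa => ?_
  by_cases hℓ2 : ℓ = 2
  · subst hℓ2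
    obtain ⟨c, hc⟩ := hpar
    omega
  · have hs1 : (ℓ : ℤ) ∣ s - 1 := by exact_mod_cast (Int.natCast_dvd_natCast.mpr hℓs)
    have h2 := dvd_sub (hℓ ℓ hℓp hℓ2 hℓa).symm.dvd hs1
    rw [show (s : ℤ) - -1 - (s - 1) = 2 by ring] at h2
    exact hℓ2 ((Nat.prime_dvd_prime_iff_eq hℓp prime_two).mp (by exact_mod_cast h2))

theorem not_exists_pow_eq_of_odd_add {a s : ℕ} (hs : s ≠ 1) (hpar : Odd (s + a)) :
    ¬ ∃ e, s = a ^ e := by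
  rintro ⟨_ | e, rfl⟩
  · exact hs (pow_zero a)
  · simp [← Nat.not_even_iff_odd, Nat.even_add, Nat.even_pow] at hpar

theorem isRieselNumber_of_modEq {a s τ p₀ : ℕ} (ha : 2 ≤ a) (hτ : 0 < τ) (hp₀ : p₀.Prime)
    (hp₀τ : p₀ ∣ a ^ 2 ^ τ - 1) (hp₀a : ¬ p₀ ∣ a - 1)
    (hcover : ∀ j < τ,
      ∃ q, q.Prime ∧ q ≠ 2 ∧ q ≠ p₀ ∧ q ∣ a ^ 2 ^ j + 1 ∧ q ∣ a ^ 2 ^ τ - 1)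
    (hs₀ : (s : ℤ) ≡ 1 [ZMOD p₀]) (hpar : Odd (s + a))
    (hs : ∀ q, q.Prime → q ≠ 2 → q ≠ p₀ → q ∣ a ^ 2 ^ τ - 1 → (s : ℤ) ≡ -1 [ZMOD q]) :
    IsRieselNumber a s := by
  have hs3 : 3 ≤ s := by
    obtain ⟨q, hq, hq2, hq₀, -, hqτ⟩ := hcover 0 hτ
    have hqs := Int.le_of_dvd (by omega) (hs q hq hq2 hq₀ hqτ).symm.dvd
    have hs2 : s ≠ 2 := by
      rintro rfl
      have h := hs₀.dvd
      norm_num at h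
      exact hp₀.one_lt.ne' (Nat.dvd_one.mp (by exact_mod_cast h))
    have := hq.two_le
    omega
  have hpow : ∀ n, 0 < n → 2 ≤ a ^ n := fun n hn => ha.trans (Nat.le_self_pow hn.ne' a)
  refine ⟨gcd_sub_one_sub_one_eq_one (by omega) (by omega) hpar fun ℓ hℓ hℓ2 hℓa => ?_,
    not_exists_pow_eq_of_odd_add (by omega) hpar, fun n hn => ⟨?_, ?_⟩⟩
  · exact hs ℓ hℓ hℓ2 (by rintro rfl; exact hp₀a hℓa)
      (hℓa.trans (Nat.sub_one_dvd_pow_sub_one a _))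
  · have := hpow n hn
    have : 6 ≤ s * a ^ n := by nlinarith
    omega
  · have hp₀τ' : (p₀ : ℤ) ∣ (a : ℤ) ^ 2 ^ τ - 1 := by
      have := Int.natCast_dvd_natCast.mpr hp₀τ
      rwa [Nat.cast_sub (Nat.one_le_pow _ _ (by omega)), Nat.cast_pow, Nat.cast_one] at this
    have hcover' : ∀ j < τ, ∃ q : ℕ, q.Prime ∧ (q : ℤ) ∣ (a : ℤ) ^ 2 ^ j + 1 ∧
        (s : ℤ) ≡ -1 [ZMOD q] := fun j hj => by
      obtain ⟨q, hq, hq2, hq₀, hqa, hqτ⟩ := hcover j hj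
      exact ⟨q, hq, by exact_mod_cast Int.natCast_dvd_natCast.mpr hqa, hs q hq hq2 hq₀ hqτ⟩
    obtain ⟨q, hq, hdvd, hqs⟩ := exists_prime_dvd_mul_pow_sub_one hp₀ hp₀τ' hs₀ hcover' n
    exact not_prime_mul_sub_one hs3 (hpow n hn) hq (by exact_mod_cast hdvd) hqs

theorem stmt_16_general (a r : ℕ) (hodd : Odd r)
    (ha2 : ¬ ∃ s : ℕ, a + 1 = 2 ^ s)
    (hτ : ∃ τ : ℕ, 0 < τ ∧ ∃ p₀ pτ : ℕ, p₀.Prime ∧ pτ.Prime ∧ p₀ ≠ pτ ∧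
      p₀ ∣ a ^ 2 ^ τ - 1 ∧ pτ ∣ a ^ 2 ^ τ - 1 ∧
      ∀ m : ℕ, m < τ → ¬ p₀ ∣ a ^ 2 ^ m - 1 ∧ ¬ pτ ∣ a ^ 2 ^ m - 1) :
    {k : ℕ | 0 < k ∧
      Nat.gcd (Nat.choose k r - 1) (a - 1) = 1 ∧
      (¬ ∃ e : ℕ, Nat.choose k r = a ^ e) ∧
      ∀ n : ℕ, 0 < n →
        1 < Nat.choose k r * a ^ n - 1 ∧
        ¬ Nat.Prime (Nat.choose k r * a ^ n - 1)}.Infinite := by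
  obtain ⟨τ, hτ, p₀, pτ, hp₀, hpτ, hne, hp₀τ, hpττ, hmin⟩ := hτ
  have ha : 2 ≤ a := by
    by_contra! h
    interval_cases a
    exacts [ha2 ⟨0, rfl⟩, ha2 ⟨1, rfl⟩]
  have hp₀a : ¬ p₀ ∣ a - 1 := by simpa using (hmin 0 hτ).1
  have hp₀2 : p₀ ≠ 2 := ne_two_of_dvd_pow_sub_one (by positivity) hp₀τ hp₀a
  have hN : 2 * (a ^ 2 ^ τ - 1) ≠ 0 := by
    have := Nat.one_lt_pow (by positivity : 2 ^ τ ≠ 0) (by omega : 1 < a)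
    omega
  let x : ℕ → ℤ := fun q => if q = p₀ then r else if q = 2 ∧ Odd a then 0 else -1
  refine ((infinite_setOf_forall_prime_dvd_modEq hN r ! x).sdiff
    (Set.finite_singleton 0)).mono ?_
  rintro k ⟨hk, hk0 : k ≠ 0⟩
  refine ⟨Nat.pos_of_ne_zero hk0, isRieselNumber_of_modEq ha hτ hp₀ hp₀τ hp₀a
    (fun j hj => exists_covering_prime ha ha2 hpτ hne hpττ hmin hj) ?_ ?_ ?_⟩
  · exact choose_modEq_one_of_modEq hp₀
      (by simpa [x] using hk p₀ hp₀ (dvd_mul_of_dvd_right hp₀τ 2))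
  · exact odd_choose_add hodd
      (by simpa [x, hp₀2.symm] using hk 2 prime_two (dvd_mul_right 2 _))
  · intro q hq hq2 hq₀ hqd
    exact choose_modEq_neg_one_of_modEq hq hodd
      (by simpa [x, hq2, hq₀] using hk q hq (dvd_mul_of_dvd_right hqd 2))

theorem stmt_16 (a r : ℕ) (ha : 0 < a) (hr : 0 < r) (hodd : Odd r)
    (ha2 : ¬ ∃ s : ℕ, a + 1 = 2 ^ s)
    (hτ : ∃ τ : ℕ, 0 < τ ∧ ∃ p₀ pτ : ℕ, p₀.Prime ∧ pτ.Prime ∧ p₀ ≠ pτ ∧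
      p₀ ∣ a ^ 2 ^ τ - 1 ∧ pτ ∣ a ^ 2 ^ τ - 1 ∧
      ∀ m : ℕ, m < τ → ¬ p₀ ∣ a ^ 2 ^ m - 1 ∧ ¬ pτ ∣ a ^ 2 ^ m - 1) :
    {k : ℕ | 0 < k ∧
      Nat.gcd (Nat.choose k r - 1) (a - 1) = 1 ∧
      (¬ ∃ e : ℕ, Nat.choose k r = a ^ e) ∧
      ∀ n : ℕ, 0 < n →
        1 < Nat.choose k r * a ^ n - 1 ∧
        ¬ Nat.Prime (Nat.choose k r * a ^ n - 1)}.Infinite :=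
  stmt_16_general a r hodd ha2 hτ
end

section
/- Let p be a prime and q a positive integer coprime to p. Let R be the residue of q modulo p. If R < p^{J₁+1}, r > R with r ≡ 1 (mod p^{J₁+1}), and k ≡ r + R − 1 (mod p^{J₂+1}) where r < p^{J₂+1}, then C(k, r) ≡ R (mod p). -/
lemma lucas_pow_aux (p : ℕ) [Fact p.Prime] (a n k : ℕ) :
    Nat.choose n k ≡
      Nat.choose (n % p ^ a) (k % p ^ a) * Nat.choose (n / p ^ a) (k / p ^ a) [MOD p] := by
  induction a generalizing n k with
  | zero => simp [Nat.mod_one, Nat.ModEq.refl]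
  | succ a ih =>
    have base := Choose.choose_modEq_choose_mod_mul_choose_div_nat (p := p) (n := n) (k := k)
    have base2 := Choose.choose_modEq_choose_mod_mul_choose_div_nat (p := p)
      (n := n % p ^ (a + 1)) (k := k % p ^ (a + 1))
    have h1 : n % p ^ (a + 1) % p = n % p :=
      Nat.mod_mod_of_dvd _ (dvd_pow_self p (Nat.succ_ne_zero a))
    have h2 : k % p ^ (a + 1) % p = k % p :=
      Nat.mod_mod_of_dvd _ (dvd_pow_self p (Nat.succ_ne_zero a))
    have h3 : n % p ^ (a + 1) / p = n / p % p ^ a := by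
      rw [pow_succ', Nat.mod_mul_right_div_self]
    have h4 : k % p ^ (a + 1) / p = k / p % p ^ a := by
      rw [pow_succ', Nat.mod_mul_right_div_self]
    have h5 : n / p ^ (a + 1) = n / p / p ^ a := by
      rw [pow_succ', Nat.div_div_eq_div_mul]
    have h6 : k / p ^ (a + 1) = k / p / p ^ a := by
      rw [pow_succ', Nat.div_div_eq_div_mul]
    rw [h1, h2, h3, h4] at base2
    calc Nat.choose n k
        ≡ Nat.choose (n % p) (k % p) * Nat.choose (n / p) (k / p) [MOD p] := base
      _ ≡ Nat.choose (n % p) (k % p) *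
            (Nat.choose (n / p % p ^ a) (k / p % p ^ a) *
              Nat.choose (n / p / p ^ a) (k / p / p ^ a)) [MOD p] :=
          Nat.ModEq.mul_left _ (ih (n / p) (k / p))
      _ = Nat.choose (n % p) (k % p) * Nat.choose (n / p % p ^ a) (k / p % p ^ a) *
            Nat.choose (n / p / p ^ a) (k / p / p ^ a) := by ring
      _ ≡ Nat.choose (n % p ^ (a + 1)) (k % p ^ (a + 1)) *
            Nat.choose (n / p ^ (a + 1)) (k / p ^ (a + 1)) [MOD p] := by
          rw [h5, h6]; exact Nat.ModEq.mul_right _ base2.symm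

theorem stmt_17 (p : ℕ) (hp : p.Prime) (q : ℕ) (hq : 0 < q) (hcop : Nat.Coprime q p)
    (R : ℕ) (hR : R = q % p)
    (r k J₁ J₂ : ℕ)
    (hRJ₁ : R < p ^ (J₁ + 1)) (hRr : R < r)
    (hr1 : r ≡ 1 [MOD p ^ (J₁ + 1)])
    (hrJ₂ : r < p ^ (J₂ + 1))
    (hk : k ≡ r + R - 1 [MOD p ^ (J₂ + 1)]) :
    Nat.choose k r ≡ R [MOD p] := by
  haveI : Fact p.Prime := ⟨hp⟩
  have hp2 : 2 ≤ p := hp.two_le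
  have hppos : 0 < p := hp.pos
  have hRp : R < p := hR ▸ Nat.mod_lt q hppos
  have hR1 : 1 ≤ R := by
    rcases Nat.eq_zero_or_pos R with h0 | h
    · exfalso
      have hd : p ∣ q := Nat.dvd_of_mod_eq_zero (by omega)
      have hone : p ∣ 1 := hcop ▸ Nat.dvd_gcd hd dvd_rfl
      have := Nat.le_of_dvd one_pos hone
      omega
    · exact h
  have hpJ1 : 1 < p ^ (J₁ + 1) := Nat.one_lt_pow (Nat.succ_ne_zero J₁) hp2
  have hrmod : r % p ^ (J₁ + 1) = 1 := by
    have h := hr1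
    unfold Nat.ModEq at h
    rwa [Nat.mod_eq_of_lt hpJ1] at h
  set m := r / p ^ (J₁ + 1) with hm
  have hrdecomp : r = p ^ (J₁ + 1) * m + 1 := by
    have h := Nat.div_add_mod r (p ^ (J₁ + 1))
    rw [← hm, hrmod] at h
    omega
  have hm1 : 1 ≤ m := by
    rcases Nat.eq_zero_or_pos m with h0 | h
    · rw [h0] at hrdecomp; omega
    · exact h
  have hJ : J₁ + 1 ≤ J₂ := by
    have hlt : p ^ (J₁ + 1) < p ^ (J₂ + 1) := by
      calc p ^ (J₁ + 1) ≤ p ^ (J₁ + 1) * m := Nat.le_mul_of_pos_right _ hm1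
        _ < r := by omega
        _ < p ^ (J₂ + 1) := hrJ₂
    have := (Nat.pow_lt_pow_iff_right hp2).mp hlt
    omega
  have hpow : p ^ (J₂ + 1) = p ^ (J₁ + 1) * p ^ (J₂ - J₁) := by
    rw [← pow_add]; congr 1; omega
  have hm_lt : m < p ^ (J₂ - J₁) := by
    by_contra h
    push_neg at h
    have : p ^ (J₂ + 1) ≤ p ^ (J₁ + 1) * m := by
      rw [hpow]; exact Nat.mul_le_mul_left _ h
    omega
  have hub : p ^ (J₁ + 1) * m + p ^ (J₁ + 1) ≤ p ^ (J₂ + 1) := by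
    have h1 : p ^ (J₁ + 1) * (m + 1) ≤ p ^ (J₁ + 1) * p ^ (J₂ - J₁) :=
      Nat.mul_le_mul_left _ hm_lt
    rw [Nat.mul_add, Nat.mul_one] at h1
    omega
  have hkey : r + R - 1 < p ^ (J₂ + 1) := by omega
  -- Step 1: reduce k to r + R - 1
  have hkmod : k % p ^ (J₂ + 1) = r + R - 1 := by
    have h := hk
    unfold Nat.ModEq at h
    rwa [Nat.mod_eq_of_lt hkey] at h
  have step1 : Nat.choose k r ≡ Nat.choose (r + R - 1) r [MOD p] := by
    have h := lucas_pow_aux p (J₂ + 1) k r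
    rw [hkmod, Nat.mod_eq_of_lt hrJ₂, Nat.div_eq_of_lt hrJ₂, Nat.choose_zero_right,
      Nat.mul_one] at h
    exact h
  -- Step 2: compute choose (r + R - 1) r mod p
  have hsum : r + R - 1 = p ^ (J₁ + 1) * m + R := by omega
  have step2 : Nat.choose (r + R - 1) r ≡ R [MOD p] := by
    have h := lucas_pow_aux p (J₁ + 1) (r + R - 1) r
    have hnmod : (r + R - 1) % p ^ (J₁ + 1) = R := by
      rw [hsum, Nat.mul_add_mod, Nat.mod_eq_of_lt hRJ₁]
    have hndiv : (r + R - 1) / p ^ (J₁ + 1) = m := by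
      rw [hsum, Nat.mul_add_div (by positivity), Nat.div_eq_of_lt hRJ₁, Nat.add_zero]
    have hrdiv : r / p ^ (J₁ + 1) = m := hm.symm
    rw [hnmod, hndiv, hrmod, hrdiv, Nat.choose_one_right, Nat.choose_self, Nat.mul_one] at h
    exact h
  exact step1.trans step2
end
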